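/- arXiv:1906.06163 — 8 statements merged into one kernel-verified Lean document; each statement's English description precedes it below -/
import Mathlib

section
/- Let N be a proper unrooted phylogenetic network on leaf set X with |X| ≥ 2. Then ℓ(N) ≤ p(N), where ℓ(N) is the minimum, over spanning trees T of N, of the number of leaves of T not in X, and p(N) = k - |X| + 1 where k is minimal such that V(N) can be partitioned into paths π₁,...,π_k with the property that for each i ≥ 2, an endpoint of π_i is adjacent in N to a vertex of some earlier path. -/
open SimpleGraph

/-- Degree of a vertex (cardinality of its neighbour set). -/
noncomputable def deg {V : Type*} (G : SimpleGraph V) (v : V) : ℕ := (G.neighborSet v).ncard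

/-- Leaves (degree-1 vertices) of a graph. -/
def leaves {V : Type*} (G : SimpleGraph V) : Set V := {v | deg G v = 1}

/-- An unrooted phylogenetic network on `X`: connected, no degree-2 vertices,
and the degree-1 vertices are exactly the elements of `X`. -/
def IsPhylo {V : Type*} (G : SimpleGraph V) (X : Set V) : Prop :=
  G.Connected ∧ (∀ v, deg G v ≠ 2) ∧ leaves G = X

/-- Proper: every component obtained by removing a cut edge or a cut vertex
contains an element of `X` (every vertex can still reach an element of `X`). -/
def IsProper {V : Type*} (G : SimpleGraph V) (X : Set V) : Prop :=
  (∀ e ∈ G.edgeSet, ∀ v : V, ∃ x ∈ X, (G.deleteEdges {e}).Reachable v x) ∧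
  (∀ w : V, ∀ v : ({w}ᶜ : Set V), ∃ x : ({w}ᶜ : Set V),
      (x : V) ∈ X ∧ (G.induce {w}ᶜ).Reachable v x)

/-- A spanning tree of `G`, viewed as a graph on the same vertex set. -/
def IsSpanningTree {V : Type*} (G T : SimpleGraph V) : Prop := T ≤ G ∧ T.IsTree

/-- A support tree: a spanning tree whose leaf set is exactly `X`. -/
def IsSupportTree {V : Type*} (G T : SimpleGraph V) (X : Set V) : Prop :=
  IsSpanningTree G T ∧ leaves T = X

/-- `G` is tree-based (w.r.t. leaf set `X`): it has a support tree. -/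
def TreeBased {V : Type*} (G : SimpleGraph V) (X : Set V) : Prop := ∃ T, IsSupportTree G T X

/-- `ℓ(N)`: minimum number of non-`X` leaves over all spanning trees. -/
noncomputable def ell {V : Type*} (G : SimpleGraph V) (X : Set V) : ℕ :=
  sInf {n | ∃ T, IsSpanningTree G T ∧ n = (leaves T \ X).ncard}

/-- A (nonempty) path in `G`: a list of distinct consecutively adjacent vertices. -/
def IsGPath {V : Type*} (G : SimpleGraph V) (l : List V) : Prop :=
  l ≠ [] ∧ l.Nodup ∧ l.Chain' G.Adj

/-- `a` is an endpoint of the path `l`. -/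
def IsEndpoint {V : Type*} (l : List V) (a : V) : Prop := l.head? = some a ∨ l.getLast? = some a

/-- A sequence of paths partitioning the vertex set such that every path after the
first has an endpoint adjacent (in `G`) to a vertex of an earlier path. -/
def IsPathPartition {V : Type*} (G : SimpleGraph V) {k : ℕ} (π : Fin k → List V) : Prop :=
  (∀ i, IsGPath G (π i)) ∧ (∀ v : V, ∃! i, v ∈ π i) ∧
  ∀ i : Fin k, 0 < (i : ℕ) →
    ∃ a, IsEndpoint (π i) a ∧ ∃ j : Fin k, (j : ℕ) < (i : ℕ) ∧ ∃ b ∈ π j, G.Adj a b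

/-- `p(N) = k - |X| + 1`, where `k` is the minimal number of paths in such a partition. -/
noncomputable def pMeasure {V : Type*} (G : SimpleGraph V) (X : Set V) : ℕ :=
  sInf {k | ∃ π : Fin k → List V, IsPathPartition G π} + 1 - X.ncard


section Aux
variable {V : Type*}

/-- The graph determined by a parent function. -/
def parentGraph (f : V → V) (r : V) : SimpleGraph V :=
  SimpleGraph.fromRel (fun u v => u ≠ r ∧ f u = v)

lemma parentGraph_adj (f : V → V) (r : V) {u v : V} :
    (parentGraph f r).Adj u v ↔ u ≠ v ∧ ((u ≠ r ∧ f u = v) ∨ (v ≠ r ∧ f v = u)) := by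
  simp [parentGraph, fromRel_adj]

lemma parentGraph_isTree (f : V → V) (r : V) (rank : V → ℕ)
    (hdec : ∀ v, v ≠ r → rank (f v) < rank v) : (parentGraph f r).IsTree := by
  classical
  set T := parentGraph f r with hT
  have hadj : ∀ v, v ≠ r → T.Adj v (f v) := by
    intro v hv
    rw [parentGraph_adj]
    refine ⟨?_, Or.inl ⟨hv, rfl⟩⟩
    intro h
    have := hdec v hv
    rw [← h] at this
    omega
  have hreach : ∀ n v, rank v < n → T.Reachable v r := by
    intro n
    induction n with
    | zero => omega
    | succ n ih =>
      intro v hv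
      by_cases h : v = r
      · subst h; rfl
      · exact ((hadj v h).reachable).trans (ih (f v) (by have := hdec v h; omega))
  have : Nonempty V := ⟨r⟩
  constructor
  · exact Connected.mk (fun u v => (hreach (rank u + 1) u (by omega)).trans
      (hreach (rank v + 1) v (by omega)).symm) 
  · intro v c hc
    -- pick a vertex of maximal rank on the cycle
    obtain ⟨u, hu, hmax⟩ := Finset.exists_max_image c.support.toFinset rank
      ⟨v, List.mem_toFinset.2 c.start_mem_support⟩
    rw [List.mem_toFinset] at hu
    have hmax' : ∀ w ∈ c.support, rank w ≤ rank u := fun w hw =>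
      hmax w (List.mem_toFinset.2 hw)
    have hc' := hc.rotate hu
    have hsupp : ∀ w ∈ (c.rotate u hu).support, rank w ≤ rank u := by
      intro w hw
      rw [Walk.support_eq_cons, List.mem_cons] at hw
      rcases hw with h1 | h1
      · exact h1 ▸ le_refl _
      · exact hmax' w (List.mem_of_mem_tail
          ((List.IsRotated.mem_iff (Walk.support_rotate c u hu)).1 h1))
    set c' := c.rotate u hu with hc'def
    clear_value c'
    have key : ∀ w, T.Adj u w → w ∈ c'.support → w = f u := by
      intro w hadjw hwmem
      rw [parentGraph_adj] at hadjw
      rcases hadjw.2 with ⟨_, h⟩ | ⟨hwr, h⟩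
      · exact h.symm
      · exfalso
        have h2 := hdec w hwr
        rw [h] at h2
        exact absurd (hsupp w hwmem) (by omega)
    cases c' with
    | nil => exact hc'.ne_nil rfl
    | cons h p =>
      rename_i w
      have h3 := hc'.three_le_length
      rw [SimpleGraph.Walk.cons_isCycle_iff] at hc'
      have hw1 : w = f u := key w h (by
        rw [Walk.support_cons]
        exact List.mem_cons_of_mem _ p.start_mem_support)
      -- now the last vertex before u on p
      have hplen : 0 < p.reverse.length := by
        rw [Walk.length_reverse]
        simp only [Walk.length_cons] at h3
        omega
      cases hp : p.reverse with
      | nil => rw [hp] at hplen; simp at hplen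
      | cons h' q =>
        rename_i b
        have hb : b = f u := by
          refine key b h' ?_
          rw [Walk.support_cons]
          have : b ∈ p.reverse.support := by
            rw [hp, Walk.support_cons]
            exact List.mem_cons_of_mem _ q.start_mem_support
          rw [Walk.support_reverse, List.mem_reverse] at this
          exact List.mem_cons_of_mem _ this
        -- then the edge s(u, b) is both the first edge of `cons h p` and in p.edges
        have hedge : s(u, b) ∈ p.edges := by
          have : s(u, b) ∈ p.reverse.edges := by
            rw [hp, Walk.edges_cons]
            exact List.mem_cons_self
          rwa [Walk.edges_reverse, List.mem_reverse] at this
        rw [hb, ← hw1] at hedge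
        exact hc'.2 hedge

lemma exists_pathPartition [Finite V] [Nonempty V] (G : SimpleGraph V) (hG : G.Connected) :
    ∃ (k : ℕ) (π : Fin k → List V), IsPathPartition G π := by
  classical
  have : Fintype V := Fintype.ofFinite V
  obtain ⟨d⟩ := ‹Nonempty V›
  set P : List V → Prop := fun l => l ≠ [] ∧ l.Nodup ∧
    ∀ i < l.length, 0 < i → ∃ j < i, G.Adj (l.getD i d) (l.getD j d) with hP
  have step : ∀ (l : List V) (u w : V), G.Walk u w → u ∈ l → w ∉ l →
      ∃ x, x ∉ l ∧ ∃ y ∈ l, G.Adj y x := by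
    intro l u w p
    induction p with
    | nil => intro h1 h2; exact absurd h1 h2
    | @cons u v w h q ih =>
      intro h1 h2
      by_cases hm : v ∈ l
      · exact ih hm h2
      · exact ⟨v, hm, u, h1, h⟩
  have ext : ∀ (l : List V) (x y : V), P l → x ∉ l → y ∈ l → G.Adj y x → P (l ++ [x]) := by
    intro l x y hl hx hy hadj
    refine ⟨by simp, ?_, ?_⟩
    · exact hl.2.1.append (List.nodup_singleton x)
        (fun a ha hb => by rw [List.mem_singleton] at hb; exact absurd (hb ▸ ha) hx)
    · intro i hi hi0
      rw [List.length_append, List.length_singleton] at hi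
      rcases lt_or_ge i l.length with h | h
      · obtain ⟨j, hj, hadj'⟩ := hl.2.2 i h hi0
        exact ⟨j, hj, by rwa [List.getD_append _ _ _ _ h, List.getD_append _ _ _ _ (hj.trans h)]⟩
      · have hieq : i = l.length := by omega
        refine ⟨l.idxOf y, ?_, ?_⟩
        · rw [hieq]; exact List.idxOf_lt_length_iff.2 hy
        · rw [hieq, List.getD_append_right _ _ _ _ le_rfl, Nat.sub_self]
          rw [List.getD_append _ _ _ _ (List.idxOf_lt_length_iff.2 hy)]
          rw [List.getD_eq_getElem _ _ (List.idxOf_lt_length_iff.2 hy),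
            List.getElem_idxOf (List.idxOf_lt_length_iff.2 hy)]
          simpa using hadj.symm
  have grow : ∀ (n : ℕ) (l : List V), P l → Fintype.card V ≤ l.length + n →
      ∃ l', P l' ∧ ∀ v, v ∈ l' := by
    intro n
    induction n with
    | zero =>
      intro l hl hcard
      refine ⟨l, hl, fun v => ?_⟩
      rw [← List.mem_toFinset]
      have h1 : l.toFinset.card = l.length := List.toFinset_card_of_nodup hl.2.1
      have : l.toFinset = Finset.univ := Finset.eq_univ_of_card _
        (le_antisymm (Finset.card_le_univ _) (by omega))
      rw [this]; exact Finset.mem_univ v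
    | succ n ih =>
      intro l hl hcard
      by_cases hall : ∀ v, v ∈ l
      · exact ⟨l, hl, hall⟩
      · push_neg at hall
        obtain ⟨w, hw⟩ := hall
        have hu : l.head hl.1 ∈ l := List.head_mem hl.1
        obtain ⟨p⟩ := hG.preconnected (l.head hl.1) w
        obtain ⟨x, hx, y, hy, hadj⟩ := step l _ w p hu hw
        refine ih (l ++ [x]) (ext l x y hl hx hy hadj) ?_
        rw [List.length_append, List.length_singleton]; omega
  obtain ⟨l, hl, hall⟩ := grow (Fintype.card V) [d] ⟨by simp, List.nodup_singleton d,
    fun i hi hi0 => by simp at hi; omega⟩ (by simp)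
  refine ⟨l.length, fun i => [l.get i], ?_, ?_, ?_⟩
  · exact fun i => ⟨by simp, List.nodup_singleton _, List.isChain_singleton _⟩
  · intro v
    obtain ⟨i, hi⟩ := List.mem_iff_get.1 (hall v)
    refine ⟨i, by rw [← hi]; exact List.mem_singleton_self _, ?_⟩
    intro j hj
    rw [List.mem_singleton] at hj
    exact (List.Nodup.get_inj_iff hl.2.1).1 (by rw [← hj, hi])
  · intro i hi
    obtain ⟨j, hj, hadj⟩ := hl.2.2 i i.isLt hi
    refine ⟨l.get i, Or.inl rfl, ⟨j, hj.trans i.isLt⟩, hj, l.get ⟨j, hj.trans i.isLt⟩,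
      List.mem_singleton_self _, ?_⟩
    rwa [List.getD_eq_getElem _ _ i.isLt, List.getD_eq_getElem _ _ (hj.trans i.isLt)] at hadj

lemma exists_good_tree [Finite V] [Nonempty V] (G : SimpleGraph V)
    {k : ℕ} (π : Fin k → List V) (hπ : IsPathPartition G π) :
    ∃ T : SimpleGraph V, T ≤ G ∧ T.IsTree ∧ (leaves T).ncard ≤ k + 1 := by
  classical
  have instF : Fintype V := Fintype.ofFinite V
  set N := Fintype.card V with hN
  obtain ⟨hpath, hpart, hatt⟩ := hπ
  obtain ⟨v0⟩ := ‹Nonempty V›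
  have hk : 0 < k := (hpart v0).exists.choose.pos
  set i0 : Fin k := ⟨0, hk⟩ with hi0
  -- normalise each path so that, for i ≠ 0, its head is attached to an earlier path
  have hsel : ∀ i : Fin k, ∃ (l : List V) (b : V) (j : Fin k),
      (∀ v, v ∈ l ↔ v ∈ π i) ∧ l ≠ [] ∧ l.Nodup ∧ l.Chain' G.Adj ∧
      (0 < (i : ℕ) → ((j : ℕ) < (i : ℕ) ∧ b ∈ π j ∧
        ∀ hl : l ≠ [], G.Adj (l.head hl) b)) := by
    intro i
    obtain ⟨hne, hnd, hch⟩ := hpath i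
    by_cases hi : 0 < (i : ℕ)
    · obtain ⟨a, ha, j, hj, b, hb, hadj⟩ := hatt i hi
      rcases ha with ha | ha
      · refine ⟨π i, b, j, fun v => Iff.rfl, hne, hnd, hch, fun _ => ⟨hj, hb, fun hl => ?_⟩⟩
        rw [List.head?_eq_head hl] at ha
        rw [Option.some_inj.1 ha]
        exact hadj
      · refine ⟨(π i).reverse, b, j, fun v => List.mem_reverse, by simpa using hne,
          by simpa using hnd, ?_, fun _ => ⟨hj, hb, fun hl => ?_⟩⟩
        · show List.IsChain _ _
          rw [List.isChain_reverse]
          exact hch.imp fun x y h => h.symm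
        · have : (π i).reverse.head? = some a := by rw [List.head?_reverse]; exact ha
          rw [List.head?_eq_head hl] at this
          rw [Option.some_inj.1 this]
          exact hadj
    · exact ⟨π i, v0, i, fun v => Iff.rfl, hne, hnd, hch, fun h => absurd h hi⟩
  choose ρ b jdx hmem hne hnd hch hsel2 using hsel
  -- index and position of each vertex
  have hidx0 : ∀ v : V, ∃ i : Fin k, v ∈ π i ∧ ∀ j, v ∈ π j → j = i := by
    intro v; obtain ⟨i, h1, h2⟩ := hpart v; exact ⟨i, h1, h2⟩
  choose idx hidx huni using hidx0
  have huni' : ∀ (v : V) (i : Fin k), v ∈ ρ i → idx v = i :=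
    fun v i h => (huni v i ((hmem i v).1 h)).symm
  set pos : V → ℕ := fun v => (ρ (idx v)).idxOf v with hposdef
  have hvmem : ∀ v, v ∈ ρ (idx v) := fun v => (hmem _ v).2 (hidx v)
  have hpos : ∀ v, pos v < (ρ (idx v)).length := fun v => List.idxOf_lt_length_iff.2 (hvmem v)
  have hget : ∀ v, (ρ (idx v))[pos v]'(hpos v) = v := fun v => List.getElem_idxOf (hpos v)
  have hlen : ∀ i, (ρ i).length ≤ N := fun i => (hnd i).length_le_card
  have hposget : ∀ (i : Fin k) (p : ℕ) (hp : p < (ρ i).length),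
      idx ((ρ i)[p]'hp) = i ∧ pos ((ρ i)[p]'hp) = p := by
    intro i p hp
    have hm : (ρ i)[p]'hp ∈ ρ i := List.getElem_mem hp
    have h1 : idx ((ρ i)[p]'hp) = i := huni' _ i hm
    refine ⟨h1, ?_⟩
    have hlt : (ρ i).idxOf ((ρ i)[p]'hp) < (ρ i).length := List.idxOf_lt_length_iff.2 hm
    have h2 : (ρ i)[(ρ i).idxOf ((ρ i)[p]'hp)]'hlt = (ρ i)[p]'hp := List.getElem_idxOf hlt
    have h3 : (ρ i).idxOf ((ρ i)[p]'hp) = p := ((hnd i).getElem_inj_iff).1 h2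
    simp only [hposdef]
    rw [h1]
    exact h3
  -- the root
  set r : V := (ρ i0).head (hne i0) with hrdef
  have hlen0 : 0 < (ρ i0).length := List.length_pos_iff.2 (hne i0)
  have hr0 : r = (ρ i0)[0]'hlen0 := List.head_eq_getElem_zero (hne i0)
  have hidxr : idx r = i0 := by rw [hr0]; exact (hposget i0 0 hlen0).1
  have hposr : pos r = 0 := by rw [hr0]; exact (hposget i0 0 hlen0).2
  have h0 : ∀ v, idx v = i0 → pos v = 0 → v = r := by
    intro v h1 h2
    have h3 := hget v
    simp only [h1, h2] at h3
    rw [hr0, ← h3]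
  -- the parent function
  set f : V → V := fun v => if v = r then v else
    (if pos v = 0 then b (idx v) else (ρ (idx v)).getD (pos v - 1) v) with hfdef
  set rank : V → ℕ := fun v => (idx v : ℕ) * (N + 1) + pos v with hrankdef
  have hposN : ∀ v, pos v ≤ N := fun v => le_of_lt (lt_of_lt_of_le (hpos v) (hlen _))
  have master : ∀ v, v ≠ r → G.Adj v (f v) ∧ rank (f v) < rank v := by
    intro v hv
    by_cases hp0 : pos v = 0
    · -- v is the head of its path, which is not path 0
      have hne0 : idx v ≠ i0 := fun h => hv (h0 v h hp0)
      have hipos : 0 < (idx v : ℕ) := Nat.pos_of_ne_zero (fun h => hne0 (Fin.ext h))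
      obtain ⟨hj, hbmem, hadj⟩ := hsel2 (idx v) hipos
      have hf : f v = b (idx v) := by simp only [hfdef]; rw [if_neg hv, if_pos hp0]
      have hvhead : (ρ (idx v)).head (hne _) = v := by
        have h3 := hget v
        simp only [hp0] at h3
        rw [List.head_eq_getElem_zero, h3]
      have hAdj : G.Adj v (f v) := by
        have h4 := hadj (hne _)
        rw [hvhead] at h4
        rw [hf]
        exact h4
      refine ⟨hAdj, ?_⟩
      have hidxb : idx (b (idx v)) = jdx (idx v) := huni' _ _ ((hmem _ _).2 hbmem)
      have hbN : pos (b (idx v)) ≤ N := hposN _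
      have e1 : ((jdx (idx v) : ℕ) + 1) * (N + 1) ≤ (idx v : ℕ) * (N + 1) :=
        Nat.mul_le_mul_right _ hj
      have e2 : ((jdx (idx v) : ℕ) + 1) * (N + 1) =
          (jdx (idx v) : ℕ) * (N + 1) + (N + 1) := by ring
      simp only [hrankdef, hf, hidxb, hp0]
      omega
    · -- v has a predecessor in its own path
      have hlt : pos v - 1 < (ρ (idx v)).length := by have := hpos v; omega
      have hf : f v = (ρ (idx v))[pos v - 1]'hlt := by
        simp only [hfdef]
        rw [if_neg hv, if_neg hp0, List.getD_eq_getElem _ _ hlt]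
      have hchain := List.isChain_iff_getElem.1 (hch (idx v))
      have hAdj : G.Adj ((ρ (idx v))[pos v - 1]'hlt) v := by
        have h5 := hchain (pos v - 1) (by have := hpos v; omega)
        have hsucc : pos v - 1 + 1 = pos v := by omega
        simp only [hsucc, hget v] at h5
        exact h5
      obtain ⟨hi1, hp1⟩ := hposget (idx v) (pos v - 1) hlt
      refine ⟨by rw [hf]; exact hAdj.symm, ?_⟩
      simp only [hrankdef, hf, hi1, hp1]
      omega
  have hfr : f r = r := by simp [hfdef]
  -- the spanning tree
  refine ⟨parentGraph f r, ?_, parentGraph_isTree f r rank (fun v hv => (master v hv).2), ?_⟩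
  · intro u v h
    rw [parentGraph_adj] at h
    rcases h.2 with ⟨hur, hfu⟩ | ⟨hvr, hfv⟩
    · exact hfu ▸ (master u hur).1
    · exact (hfv ▸ (master v hvr).1).symm
  · -- leaves are among path-ends and the root
    set T := parentGraph f r with hTdef
    have hsub : leaves T ⊆ insert r (Set.range fun i : Fin k => (ρ i).getLast (hne i)) := by
      intro v hv
      by_contra hcon
      simp only [Set.mem_insert_iff, Set.mem_range, not_or, not_exists] at hcon
      obtain ⟨hvr, hvlast⟩ := hcon
      -- v is not the last vertex of its path
      have hnotlast : pos v ≠ (ρ (idx v)).length - 1 := by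
        intro hh
        apply hvlast (idx v)
        have h3 := hget v
        simp only [hh] at h3
        rw [List.getLast_eq_getElem, h3]
      have hsucclt : pos v + 1 < (ρ (idx v)).length := by have := hpos v; omega
      set u := (ρ (idx v))[pos v + 1]'hsucclt with hudef
      have hiu : idx u = idx v := (hposget (idx v) (pos v + 1) hsucclt).1
      have hpu : pos u = pos v + 1 := (hposget (idx v) (pos v + 1) hsucclt).2
      have hur : u ≠ r := by
        intro hh
        rw [hh] at hpu
        rw [hposr] at hpu
        omega
      have hfu : f u = v := by
        simp only [hfdef]
        rw [if_neg hur, if_neg (by rw [hpu]; omega)]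
        rw [hiu, hpu]
        have : pos v + 1 - 1 = pos v := by omega
        rw [this, List.getD_eq_getElem _ _ (hpos v)]
        exact hget v
      have hneuv : v ≠ u := by
        intro hh
        rw [← hh] at hpu
        omega
      have hadj1 : T.Adj v u := by
        rw [hTdef, parentGraph_adj]
        exact ⟨hneuv, Or.inr ⟨hur, hfu⟩⟩
      have hadj2 : T.Adj v (f v) := by
        rw [hTdef, parentGraph_adj]
        refine ⟨?_, Or.inl ⟨hvr, rfl⟩⟩
        intro hh
        have := (master v hvr).2
        rw [← hh] at this
        omega
      have hnefu : u ≠ f v := by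
        intro hh
        have h6 := (master v hvr).2
        rw [← hh] at h6
        simp only [hrankdef, hiu, hpu] at h6
        omega
      have hpair : ({u, f v} : Set V) ⊆ T.neighborSet v := by
        intro x hx
        rcases hx with hx | hx
        · exact hx ▸ hadj1
        · exact hx ▸ hadj2
      have h7 : ({u, f v} : Set V).ncard ≤ (T.neighborSet v).ncard :=
        Set.ncard_le_ncard hpair (Set.toFinite _)
      rw [Set.ncard_pair hnefu] at h7
      have : deg T v = 1 := hv
      rw [deg] at this
      omega
    calc (leaves T).ncard ≤ (insert r (Set.range fun i : Fin k => (ρ i).getLast (hne i))).ncard :=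
          Set.ncard_le_ncard hsub (Set.toFinite _)
      _ ≤ (Set.range fun i : Fin k => (ρ i).getLast (hne i)).ncard + 1 := Set.ncard_insert_le _ _
      _ ≤ k + 1 := by
          have h8 : (Set.range fun i : Fin k => (ρ i).getLast (hne i)).ncard ≤ k := by
            rw [← Set.image_univ]
            calc ((fun i : Fin k => (ρ i).getLast (hne i)) '' Set.univ).ncard
                ≤ (Set.univ : Set (Fin k)).ncard := Set.ncard_image_le (Set.toFinite _)
              _ = k := by rw [Set.ncard_univ, Nat.card_eq_fintype_card, Fintype.card_fin]
          omega

end Aux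

theorem stmt0 {V : Type*} [Finite V] (G : SimpleGraph V) (X : Set V)
    (hphylo : IsPhylo G X) (hproper : IsProper G X) (hX : 2 ≤ X.ncard) :
    ell G X ≤ pMeasure G X := by
  classical
  have hne : X.Nonempty := Set.nonempty_of_ncard_ne_zero (by omega)
  have hNE : Nonempty V := ⟨hne.choose⟩
  obtain ⟨hconn, hdeg2, hleaves⟩ := hphylo
  obtain ⟨k', π', hπ'⟩ := exists_pathPartition G hconn
  set S := {k | ∃ π : Fin k → List V, IsPathPartition G π} with hS
  have hSne : S.Nonempty := ⟨k', π', hπ'⟩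
  obtain ⟨π, hπ⟩ := Nat.sInf_mem hSne
  obtain ⟨T, hTG, hTree, hcount⟩ := exists_good_tree G π hπ
  have hXsub : X ⊆ leaves T := by
    intro x hx
    have hdegG : deg G x = 1 := by rw [← hleaves] at hx; exact hx
    have hsubn : T.neighborSet x ⊆ G.neighborSet x := fun y hy => hTG hy
    have hle : deg T x ≤ deg G x := Set.ncard_le_ncard hsubn (Set.toFinite _)
    have hposdeg : 0 < deg T x := by
      have h2 : 1 < X.ncard := hX
      rw [Set.one_lt_ncard_iff (Set.toFinite _)] at h2
      obtain ⟨a, c, ha, hc, hac⟩ := h2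
      have hy : ∃ y, y ≠ x := by
        by_cases hax : a = x
        · exact ⟨c, fun h => hac ((h.trans hax.symm).symm ▸ rfl)⟩
        · exact ⟨a, hax⟩
      obtain ⟨y, hyx⟩ := hy
      obtain ⟨p⟩ := hTree.isConnected.preconnected x y
      have hnn : ¬ p.Nil := SimpleGraph.Walk.not_nil_of_ne (fun h => hyx h.symm)
      have hadj := SimpleGraph.Walk.adj_snd hnn
      rw [deg]
      rw [Set.ncard_pos (Set.toFinite _)]
      exact ⟨p.getVert 1, hadj⟩
    have : deg T x = 1 := by omega
    exact this
  have hdiff : (leaves T \ X).ncard = (leaves T).ncard - X.ncard :=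
    Set.ncard_diff hXsub (Set.toFinite _)
  have h1 : ell G X ≤ (leaves T \ X).ncard := Nat.sInf_le ⟨T, ⟨hTG, hTree⟩, rfl⟩
  rw [pMeasure, ← hS]
  omega
end

section
/- Let N be a proper unrooted phylogenetic network on leaf set X with |X| ≥ 2. Then t(N) ≤ τ(N), where t(N) is the minimum number of leaves that must be added to N to make it tree-based, and τ(N) is the minimum k such that N has a support network of tier k. -/
open SimpleGraph

/-- Support network: a connected spanning subgraph whose leaves are exactly `X`. -/
def IsSupportNet {V : Type*} (G H : SimpleGraph V) (X : Set V) : Prop :=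
  H ≤ G ∧ H.Connected ∧ leaves H = X

/-- Tier of a (connected, spanning) graph: `|E| - |V| + 1`. -/
noncomputable def tier {V : Type*} (H : SimpleGraph V) : ℕ := H.edgeSet.ncard + 1 - Nat.card V

/-- `τ(N)`: minimal tier of a support network of `N`. -/
noncomputable def tauMeasure {V : Type*} (G : SimpleGraph V) (X : Set V) : ℕ :=
  sInf {k | ∃ H, IsSupportNet G H X ∧ k = tier H}

/-- A graph together with a distinguished leaf-label set. -/
structure GraphOn : Type 1 where
  V : Type
  G : SimpleGraph V
  X : Set V

def TreeBasedOn (A : GraphOn) : Prop := TreeBased A.G A.X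

/-- The graph obtained by attaching a new leaf to the edge `{u,v}`:
subdivide `{u,v}` with new vertex `inr 0` and attach the pendant leaf `inr 1`. -/
def addLeafG {V : Type} (G : SimpleGraph V) (u v : V) : SimpleGraph (V ⊕ Fin 2) :=
  SimpleGraph.fromEdgeSet ((Sym2.map Sum.inl '' (G.edgeSet \ {s(u, v)})) ∪
    {s(Sum.inl u, Sum.inr 0), s(Sum.inl v, Sum.inr 0), s(Sum.inr 0, Sum.inr 1)})

/-- One leaf-addition step; the new leaf is added to the label set. -/
def AddLeafStep (A B : GraphOn) : Prop :=
  ∃ u v : A.V, A.G.Adj u v ∧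
    B = ⟨A.V ⊕ Fin 2, addLeafG A.G u v, Sum.inl '' A.X ∪ {Sum.inr 1}⟩

def AddLeafSteps : ℕ → GraphOn → GraphOn → Prop
  | 0, A, B => A = B
  | n + 1, A, C => ∃ B, AddLeafStep A B ∧ AddLeafSteps n B C

/-- `t(N)`: minimal number of leaf additions making the network tree-based. -/
noncomputable def tMeasure (A : GraphOn) : ℕ :=
  sInf {m | ∃ B, AddLeafSteps m A B ∧ TreeBasedOn B}

section Aux

variable {V : Type*}

lemma aux_reachable_delete {G : SimpleGraph V} {a b : V}
    (hr : (G.deleteEdges {s(a, b)}).Reachable a b) {x y : V} (w : G.Walk x y) :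
    (G.deleteEdges {s(a, b)}).Reachable x y := by
  induction w with
  | nil => exact Reachable.refl _
  | @cons x' z' y' h p ih =>
    refine Reachable.trans ?_ ih
    by_cases he : s(x', z') = s(a, b)
    · rw [Sym2.eq_iff] at he
      rcases he with ⟨rfl, rfl⟩ | ⟨rfl, rfl⟩
      · exact hr
      · exact hr.symm
    · exact (SimpleGraph.deleteEdges_adj.mpr ⟨h, by simp [he]⟩).reachable

lemma aux_connected_delete {G : SimpleGraph V} (hc : G.Connected) {a b : V}
    (hr : (G.deleteEdges {s(a, b)}).Reachable a b) : (G.deleteEdges {s(a, b)}).Connected := by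
  have hn : Nonempty V := hc.nonempty
  refine SimpleGraph.Connected.mk fun x y => ?_
  obtain ⟨w⟩ := hc.preconnected x y
  exact aux_reachable_delete hr w

lemma aux_connected_delete_cycle_edge {G : SimpleGraph V} (hc : G.Connected) {c : V}
    {p : G.Walk c c} (hp : p.IsCycle) {a b : V} (he : s(a, b) ∈ p.edges) :
    (G.deleteEdges {s(a, b)}).Connected := by
  have h := (SimpleGraph.adj_and_reachable_delete_edges_iff_exists_cycle (G := G)
      (v := a) (w := b)).mpr ⟨c, p, hp, he⟩
  exact aux_connected_delete hc h.2

lemma aux_cycle_two_nbrs {G : SimpleGraph V} {a : V} {p : G.Walk a a} (hp : p.IsCycle)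
    {v : V} (hv : v ∈ p.support) :
    ∃ w z : V, w ≠ z ∧ G.Adj v w ∧ G.Adj v z ∧ s(v, w) ∈ p.edges ∧ s(v, z) ∈ p.edges := by
  classical
  have hq : (p.rotate v hv).IsCycle := hp.rotate hv
  have hlen : 3 ≤ (p.rotate v hv).length := hq.three_le_length
  have hperm := (p.rotate_edges v hv).perm
  set q := p.rotate v hv with hqdef
  clear_value q
  cases q with
  | nil => exact absurd rfl hq.ne_nil
  | @cons _ w _ h₁ r =>
    rw [SimpleGraph.Walk.cons_isCycle_iff] at hq
    have hrlen : 2 ≤ r.length := by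
      simpa using hlen
    have hrnil : ¬ r.reverse.Nil := by
      rw [SimpleGraph.Walk.not_nil_iff_lt_length]
      rw [SimpleGraph.Walk.length_reverse]
      omega
    obtain ⟨z, h₂, r₂, hre⟩ := SimpleGraph.Walk.not_nil_iff.mp hrnil
    have hz_r : s(v, z) ∈ r.edges := by
      have : s(v, z) ∈ r.reverse.edges := by
        rw [hre]; simp
      rwa [SimpleGraph.Walk.edges_reverse, List.mem_reverse] at this
    refine ⟨w, z, ?_, h₁, h₂, ?_, ?_⟩
    · rintro rfl
      exact hq.2 hz_r
    · exact hperm.mem_iff.mp (by simp)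
    · exact hperm.mem_iff.mp (by simp [hz_r])

lemma aux_walk_closed {G : SimpleGraph V} {S : Set V}
    (hS : ∀ a ∈ S, ∀ b, G.Adj a b → b ∈ S) {x y : V} (h : G.Reachable x y) (hx : x ∈ S) :
    y ∈ S := by
  obtain ⟨w⟩ := h
  revert hx
  induction w with
  | nil => exact id
  | cons h p ih => exact fun hx => ih (hS _ hx _ h)

lemma aux_two_le_deg [Finite V] {G : SimpleGraph V} {v w z : V}
    (hw : G.Adj v w) (hz : G.Adj v z) (hne : w ≠ z) : 2 ≤ deg G v := by
  have h : ({w, z} : Set V) ⊆ G.neighborSet v := by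
    intro t ht
    rcases ht with rfl | ht
    · exact hw
    · rcases ht with rfl; exact hz
  calc 2 = ({w, z} : Set V).ncard := (Set.ncard_pair hne).symm
    _ ≤ (G.neighborSet v).ncard := Set.ncard_le_ncard h (Set.toFinite _)

lemma aux_card_le [Finite V] :
    ∀ (n : ℕ) (G : SimpleGraph V), G.Connected → G.edgeSet.ncard = n →
      Nat.card V ≤ n + 1 ∧ (n + 1 ≤ Nat.card V → G.IsAcyclic) := by
  intro n
  induction n using Nat.strong_induction_on with
  | _ n ih =>
    intro G hc hn
    by_cases hac : G.IsAcyclic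
    · have htree : G.IsTree := ⟨hc, hac⟩
      have : Fintype V := Fintype.ofFinite V
      have : Fintype G.edgeSet := Fintype.ofFinite _
      have hcard := htree.card_edgeFinset
      have h1 : 1 ≤ Fintype.card V := by
        have : Nonempty V := hc.nonempty
        exact Fintype.card_pos
      have hE : G.edgeSet.ncard = G.edgeFinset.card := by
        rw [Set.ncard_eq_toFinset_card']
        simp [SimpleGraph.edgeFinset]
      have hnn : n + 1 = Nat.card V := by
        rw [Nat.card_eq_fintype_card, ← hn, hE, hcard]
      exact ⟨hnn.ge, fun _ => hac⟩
    · unfold SimpleGraph.IsAcyclic at hac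
      push_neg at hac
      obtain ⟨a, p, hp⟩ := hac
      obtain ⟨b, hadj, q, rfl⟩ := SimpleGraph.Walk.not_nil_iff.mp hp.not_nil
      have he : s(a, b) ∈ (SimpleGraph.Walk.cons hadj q).edges := by simp
      have hmem : s(a, b) ∈ G.edgeSet := hadj
      have hc' := aux_connected_delete_cycle_edge hc hp he
      have hn' : (G.deleteEdges {s(a, b)}).edgeSet.ncard = n - 1 := by
        rw [SimpleGraph.edgeSet_deleteEdges,
          Set.ncard_diff_singleton_of_mem hmem, hn]
      have hpos : 0 < n := by
        rw [← hn]
        exact (Set.ncard_pos (Set.toFinite _)).mpr ⟨_, hmem⟩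
      have hih := ih (n - 1) (by omega) _ hc' hn'
      exact ⟨by omega, fun hcon => absurd hcon (by omega)⟩

lemma aux_sel [Finite V] {H : SimpleGraph V} (hc : H.Connected) (hnac : ¬ H.IsAcyclic)
    {x : V} (hx : deg H x = 1) :
    ∃ u v, H.Adj u v ∧ (H.deleteEdges {s(u, v)}).Connected ∧ 2 ≤ deg H u ∧ 3 ≤ deg H v := by
  unfold SimpleGraph.IsAcyclic at hnac
  push_neg at hnac
  obtain ⟨a, p, hp⟩ := hnac
  by_cases h3 : ∃ v ∈ p.support, 3 ≤ deg H v
  · obtain ⟨v, hvs, hv3⟩ := h3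
    obtain ⟨w, z, hwz, haw, haz, hew, hez⟩ := aux_cycle_two_nbrs hp hvs
    have hws : w ∈ p.support := p.snd_mem_support_of_mem_edges hew
    obtain ⟨w₁, z₁, hwz₁, haw₁, haz₁, _, _⟩ := aux_cycle_two_nbrs hp hws
    refine ⟨w, v, haw.symm, ?_, aux_two_le_deg haw₁ haz₁ hwz₁, hv3⟩
    have hsw : s(w, v) = s(v, w) := Sym2.eq_swap
    rw [hsw]
    exact aux_connected_delete_cycle_edge hc hp hew
  · push_neg at h3
    exfalso
    have hS : ∀ t ∈ {t | t ∈ p.support}, ∀ b, H.Adj t b → b ∈ {t | t ∈ p.support} := by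
      intro t ht b hb
      obtain ⟨w, z, hwz, haw, haz, hew, hez⟩ := aux_cycle_two_nbrs hp ht
      have hsub : ({w, z} : Set V) ⊆ H.neighborSet t := by
        intro s hs
        rcases hs with rfl | hs
        · exact haw
        · rcases hs with rfl; exact haz
      have hle : (H.neighborSet t).ncard ≤ ({w, z} : Set V).ncard := by
        rw [Set.ncard_pair hwz]
        exact Nat.lt_succ_iff.mp (h3 t ht)
      have heq : ({w, z} : Set V) = H.neighborSet t :=
        Set.eq_of_subset_of_ncard_le hsub hle (Set.toFinite _)
      have hbmem : b ∈ ({w, z} : Set V) := by rw [heq]; exact hb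
      rcases hbmem with rfl | hbm
      · exact p.snd_mem_support_of_mem_edges hew
      · rcases hbm with rfl; exact p.snd_mem_support_of_mem_edges hez
    have hxs : x ∈ {t | t ∈ p.support} :=
      aux_walk_closed hS (hc.preconnected a x) p.start_mem_support
    obtain ⟨w, z, hwz, haw, haz, _, _⟩ := aux_cycle_two_nbrs hp hxs
    have := aux_two_le_deg haw haz hwz
    omega

lemma aux_sym2_map_mem {α β : Type*} {f : α → β} {S : Set (Sym2 α)} {x y : β} :
    s(x, y) ∈ Sym2.map f '' S ↔ ∃ a b, f a = x ∧ f b = y ∧ s(a, b) ∈ S := by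
  constructor
  · rintro ⟨z, hz, hmap⟩
    induction z using Sym2.ind with
    | _ a b =>
      rw [Sym2.map_pair_eq, Sym2.eq_iff] at hmap
      rcases hmap with ⟨ha, hb⟩ | ⟨ha, hb⟩
      · exact ⟨a, b, ha, hb, hz⟩
      · refine ⟨b, a, hb, ha, ?_⟩
        rw [Sym2.eq_swap]; exact hz
  · rintro ⟨a, b, rfl, rfl, h⟩
    exact ⟨s(a, b), h, Sym2.map_pair_eq f a b⟩

lemma aux_tree_card {V : Type*} [Finite V] {G : SimpleGraph V} (h : G.IsTree) :
    G.edgeSet.ncard + 1 = Nat.card V := by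
  have : Fintype V := Fintype.ofFinite V
  have : Fintype G.edgeSet := Fintype.ofFinite _
  have hcard := h.card_edgeFinset
  have hE : G.edgeSet.ncard = G.edgeFinset.card := by
    rw [Set.ncard_eq_toFinset_card']
    simp [SimpleGraph.edgeFinset]
  rw [Nat.card_eq_fintype_card, hE, hcard]

lemma aux_step {V : Type} [Finite V] {G H : SimpleGraph V} {X : Set V}
    (hHG : H ≤ G) (hHc : H.Connected) (hL : leaves H = X)
    {u v : V} (hadj : H.Adj u v) (hdel : (H.deleteEdges {s(u, v)}).Connected)
    (h2u : 2 ≤ deg H u) (h3v : 3 ≤ deg H v) :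
    ∃ H' : SimpleGraph (V ⊕ Fin 2),
      H' ≤ addLeafG G u v ∧ H'.Connected ∧
      leaves H' = Sum.inl '' X ∪ {Sum.inr 1} ∧
      H'.edgeSet.ncard = H.edgeSet.ncard + 1 := by
  have huv : u ≠ v := hadj.ne
  set D := H.deleteEdges {s(u, v)} with hD
  set E' : Set (Sym2 (V ⊕ Fin 2)) :=
    (Sym2.map Sum.inl '' (H.edgeSet \ {s(u, v)})) ∪
      {s(Sum.inl u, Sum.inr 0), s(Sum.inr 0, Sum.inr 1)} with hE'
  set H' : SimpleGraph (V ⊕ Fin 2) := SimpleGraph.fromEdgeSet E' with hH'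
  -- adjacency characterization
  have hadj' : ∀ x y : V ⊕ Fin 2, H'.Adj x y ↔
      ((∃ a b, Sum.inl a = x ∧ Sum.inl b = y ∧ D.Adj a b) ∨
       (x = Sum.inl u ∧ y = Sum.inr 0) ∨ (x = Sum.inr 0 ∧ y = Sum.inl u) ∨
       (x = Sum.inr 0 ∧ y = Sum.inr 1) ∨ (x = Sum.inr 1 ∧ y = Sum.inr 0)) := by
    intro x y
    rw [hH', SimpleGraph.fromEdgeSet_adj]
    constructor
    · rintro ⟨hmem, hne⟩
      rcases hmem with him | hpair
      · obtain ⟨a, b, ha, hb, hmemE⟩ := aux_sym2_map_mem.mp him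
        left
        refine ⟨a, b, ha, hb, ?_⟩
        rw [SimpleGraph.deleteEdges_adj]
        exact ⟨hmemE.1, by simpa using hmemE.2⟩
      · rcases hpair with h | h
        · rw [Sym2.eq_iff] at h
          rcases h with ⟨rfl, rfl⟩ | ⟨rfl, rfl⟩
          · right; left; exact ⟨rfl, rfl⟩
          · right; right; left; exact ⟨rfl, rfl⟩
        · rw [Set.mem_singleton_iff, Sym2.eq_iff] at h
          rcases h with ⟨rfl, rfl⟩ | ⟨rfl, rfl⟩
          · right; right; right; left; exact ⟨rfl, rfl⟩
          · right; right; right; right; exact ⟨rfl, rfl⟩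
    · rintro (⟨a, b, rfl, rfl, hab⟩ | ⟨rfl, rfl⟩ | ⟨rfl, rfl⟩ | ⟨rfl, rfl⟩ | ⟨rfl, rfl⟩)
      · rw [SimpleGraph.deleteEdges_adj] at hab
        refine ⟨Or.inl (aux_sym2_map_mem.mpr ⟨a, b, rfl, rfl, ?_⟩), by simp [hab.1.ne]⟩
        exact ⟨hab.1, by simpa using hab.2⟩
      · exact ⟨Or.inr (by simp), by simp⟩
      · refine ⟨Or.inr ?_, by simp⟩
        rw [Sym2.eq_swap]; simp
      · exact ⟨Or.inr (by simp), by simp⟩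
      · refine ⟨Or.inr ?_, by simp⟩
        rw [Sym2.eq_swap]; simp
  -- neighbor sets
  have hnbr1 : H'.neighborSet (Sum.inr 1) = {Sum.inr 0} := by
    ext y
    rw [SimpleGraph.mem_neighborSet, hadj' (Sum.inr 1) y]
    simp
  have hnbr0 : H'.neighborSet (Sum.inr 0) = {Sum.inl u, Sum.inr 1} := by
    ext y
    rw [SimpleGraph.mem_neighborSet, hadj' (Sum.inr 0) y]
    simp
  have hnbrl : ∀ a : V, a ≠ u →
      H'.neighborSet (Sum.inl a) = Sum.inl '' (D.neighborSet a) := by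
    intro a hau
    ext y
    rw [SimpleGraph.mem_neighborSet, hadj' (Sum.inl a) y]
    constructor
    · rintro (⟨c, d, hc, rfl, hab⟩ | ⟨h, rfl⟩ | ⟨h, _⟩ | ⟨h, _⟩ | ⟨h, _⟩)
      · rw [Sum.inl.injEq] at hc
        subst hc
        exact ⟨d, hab, rfl⟩
      · exact absurd (Sum.inl.injEq .. ▸ h) hau
      · exact absurd h (by simp)
      · exact absurd h (by simp)
      · exact absurd h (by simp)
    · rintro ⟨d, hd, rfl⟩
      exact Or.inl ⟨a, d, rfl, rfl, hd⟩
  have hnbru : H'.neighborSet (Sum.inl u) = insert (Sum.inr 0) (Sum.inl '' (D.neighborSet u)) := by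
    ext y
    rw [SimpleGraph.mem_neighborSet, hadj' (Sum.inl u) y]
    constructor
    · rintro (⟨c, d, hc, rfl, hab⟩ | ⟨_, rfl⟩ | ⟨h, _⟩ | ⟨h, _⟩ | ⟨h, _⟩)
      · rw [Sum.inl.injEq] at hc
        subst hc
        exact Or.inr ⟨d, hab, rfl⟩
      · exact Or.inl rfl
      · exact absurd h (by simp)
      · exact absurd h (by simp)
      · exact absurd h (by simp)
    · rintro (rfl | ⟨d, hd, rfl⟩)
      · exact Or.inr (Or.inl ⟨rfl, rfl⟩)
      · exact Or.inl ⟨u, d, rfl, rfl, hd⟩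
  -- degrees in D
  have hDnbr : ∀ a : V, a ≠ u → a ≠ v → D.neighborSet a = H.neighborSet a := by
    intro a hau hav
    ext b
    simp only [SimpleGraph.mem_neighborSet, hD, SimpleGraph.deleteEdges_adj,
      Set.mem_singleton_iff, Sym2.eq_iff]
    constructor
    · exact fun h => h.1
    · intro h
      refine ⟨h, ?_⟩
      rintro (⟨rfl, rfl⟩ | ⟨rfl, rfl⟩) <;> simp_all
  have hDu : D.neighborSet u = H.neighborSet u \ {v} := by
    ext b
    simp only [SimpleGraph.mem_neighborSet, hD, SimpleGraph.deleteEdges_adj,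
      Set.mem_singleton_iff, Sym2.eq_iff, Set.mem_diff]
    tauto
  have hDv : D.neighborSet v = H.neighborSet v \ {u} := by
    ext b
    simp only [SimpleGraph.mem_neighborSet, hD, SimpleGraph.deleteEdges_adj,
      Set.mem_singleton_iff, Sym2.eq_iff, Set.mem_diff]
    tauto
  -- degree computations in H'
  have hdeg1 : deg H' (Sum.inr 1) = 1 := by
    rw [deg, hnbr1, Set.ncard_singleton]
  have hdeg0 : deg H' (Sum.inr 0) = 2 := by
    rw [deg, hnbr0, Set.ncard_pair (by simp)]
  have hdegl : ∀ a : V, a ≠ u → a ≠ v → deg H' (Sum.inl a) = deg H a := by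
    intro a hau hav
    rw [deg, hnbrl a hau, Set.ncard_image_of_injective _ Sum.inl_injective, hDnbr a hau hav, deg]
  have hdegu : deg H' (Sum.inl u) = deg H u := by
    rw [deg, hnbru, Set.ncard_insert_of_notMem (by simp) (Set.toFinite _),
      Set.ncard_image_of_injective _ Sum.inl_injective, hDu,
      Set.ncard_diff_singleton_of_mem (show v ∈ H.neighborSet u from hadj)]
    have : 1 ≤ deg H u := by omega
    rw [deg] at this ⊢
    omega
  have hdegv : deg H' (Sum.inl v) = deg H v - 1 := by
    rw [deg, hnbrl v (Ne.symm huv), Set.ncard_image_of_injective _ Sum.inl_injective, hDv,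
      Set.ncard_diff_singleton_of_mem (show u ∈ H.neighborSet v from hadj.symm), deg]
  -- H' ≤ addLeafG G u v
  have hle : H' ≤ addLeafG G u v := by
    rw [hH', addLeafG]
    apply SimpleGraph.fromEdgeSet_mono
    apply Set.union_subset_union
    · exact Set.image_mono (Set.diff_subset_diff_left (SimpleGraph.edgeSet_mono hHG))
    · intro e he
      rcases he with rfl | he
      · simp
      · rw [Set.mem_singleton_iff] at he
        subst he
        simp
  -- connectivity
  have hhom : ∀ {a b : V}, D.Adj a b → H'.Adj (Sum.inl a) (Sum.inl b) := by
    intro a b hab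
    rw [hadj' (Sum.inl a) (Sum.inl b)]
    exact Or.inl ⟨a, b, rfl, rfl, hab⟩
  have hreach : ∀ z : V ⊕ Fin 2, H'.Reachable z (Sum.inl u) := by
    intro z
    match z with
    | Sum.inl a =>
      exact Reachable.map ⟨Sum.inl, fun hab => hhom hab⟩ (hdel.preconnected a u)
    | Sum.inr 0 =>
      refine SimpleGraph.Adj.reachable ?_
      rw [hadj' (Sum.inr 0) (Sum.inl u)]
      right; right; left; exact ⟨rfl, rfl⟩
    | Sum.inr 1 =>
      refine Reachable.trans (v := Sum.inr 0) (SimpleGraph.Adj.reachable ?_) ?_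
      · rw [hadj' (Sum.inr 1) (Sum.inr 0)]
        right; right; right; right; exact ⟨rfl, rfl⟩
      · refine SimpleGraph.Adj.reachable ?_
        rw [hadj' (Sum.inr 0) (Sum.inl u)]
        right; right; left; exact ⟨rfl, rfl⟩
  have hconn : H'.Connected := by
    have : Nonempty (V ⊕ Fin 2) := ⟨Sum.inr 0⟩
    exact SimpleGraph.Connected.mk fun x y => (hreach x).trans (hreach y).symm
  -- leaves
  have hUdeg : ¬ deg H u = 1 := by omega
  have hVdeg : ¬ deg H v = 1 := by omega
  have hleaves : leaves H' = Sum.inl '' X ∪ {Sum.inr 1} := by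
    ext y
    match y with
    | Sum.inl a =>
      constructor
      · intro hy
        have hy' : deg H' (Sum.inl a) = 1 := hy
        by_cases hau : a = u
        · subst hau
          rw [hdegu] at hy'
          exact absurd hy' hUdeg
        by_cases hav : a = v
        · subst hav
          rw [hdegv] at hy'
          omega
        · rw [hdegl a hau hav] at hy'
          have : a ∈ leaves H := hy'
          rw [hL] at this
          exact Or.inl ⟨a, this, rfl⟩
      · intro hy
        rcases hy with ⟨b, hb, hba⟩ | hy
        · rw [Sum.inl.injEq] at hba
          rw [← hba]
          rw [← hL] at hb
          have hb' : deg H b = 1 := hb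
          have hau : b ≠ u := fun h => hUdeg (h ▸ hb')
          have hav : b ≠ v := fun h => hVdeg (h ▸ hb')
          show deg H' (Sum.inl b) = 1
          rw [hdegl b hau hav]
          exact hb'
        · exact absurd hy (by simp)
    | Sum.inr 0 =>
      constructor
      · intro hy
        have hy' : deg H' (Sum.inr 0) = 1 := hy
        rw [hdeg0] at hy'
        omega
      · intro hy
        rcases hy with ⟨b, _, hba⟩ | hy
        · exact absurd hba (by simp)
        · exact absurd hy (by simp [Fin.ext_iff])
    | Sum.inr 1 =>
      constructor
      · intro _
        exact Or.inr rfl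
      · intro _
        show deg H' (Sum.inr 1) = 1
        exact hdeg1
  -- edge count
  have hnoloop : ∀ e ∈ E', ¬ e.IsDiag := by
    intro e he
    rcases he with ⟨z, hz, rfl⟩ | he
    · induction z using Sym2.ind with
      | _ a b =>
        rw [Sym2.map_pair_eq, Sym2.mk_isDiag_iff]
        have : H.Adj a b := hz.1
        exact fun h => this.ne (Sum.inl_injective h)
    · rcases he with rfl | he
      · simp
      · rw [Set.mem_singleton_iff] at he
        subst he
        rw [Sym2.mk_isDiag_iff]
        simp [Fin.ext_iff]
  have hedgeSet : H'.edgeSet = E' := by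
    rw [hH', SimpleGraph.edgeSet_fromEdgeSet]
    ext e
    simp only [Set.mem_diff, Set.mem_setOf_eq]
    exact ⟨fun h => h.1, fun h => ⟨h, hnoloop e h⟩⟩
  have hm1 : 1 ≤ H.edgeSet.ncard := by
    have : s(u, v) ∈ H.edgeSet := hadj
    have := Set.ncard_pos (Set.toFinite _) |>.mpr ⟨_, this⟩
    omega
  have hcount : H'.edgeSet.ncard = H.edgeSet.ncard + 1 := by
    rw [hedgeSet, hE']
    have hdisj : Disjoint (Sym2.map Sum.inl '' (H.edgeSet \ {s(u, v)}))
        ({s(Sum.inl u, Sum.inr 0), s(Sum.inr 0, Sum.inr 1)} :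
          Set (Sym2 (V ⊕ Fin 2))) := by
      rw [Set.disjoint_right]
      intro e he
      rcases he with rfl | he
      · intro hmem
        obtain ⟨a, b, ha, hb, _⟩ := aux_sym2_map_mem.mp hmem
        exact absurd hb (by simp)
      · rw [Set.mem_singleton_iff] at he
        subst he
        intro hmem
        obtain ⟨a, b, ha, hb, _⟩ := aux_sym2_map_mem.mp hmem
        exact absurd ha (by simp)
    rw [Set.ncard_union_eq hdisj (Set.toFinite _) (Set.toFinite _),
      Set.ncard_image_of_injective _ (Sym2.map.injective Sum.inl_injective),
      Set.ncard_diff_singleton_of_mem (by exact hadj),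
      Set.ncard_pair (by simp [Fin.ext_iff])]
    omega
  exact ⟨H', hle, hconn, hleaves, hcount⟩

lemma aux_key : ∀ (k : ℕ) (V : Type) [Finite V] (G H : SimpleGraph V) (X : Set V),
    H ≤ G → H.Connected → leaves H = X → X.Nonempty → tier H = k →
    ∃ B, AddLeafSteps k ⟨V, G, X⟩ B ∧ TreeBasedOn B := by
  intro k
  induction k with
  | zero =>
    intro V _ G H X hHG hHc hL hXne htier
    refine ⟨⟨V, G, X⟩, rfl, ?_⟩
    obtain ⟨hle, hac⟩ := aux_card_le H.edgeSet.ncard H hHc rfl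
    have h0 : H.edgeSet.ncard + 1 ≤ Nat.card V := by
      unfold tier at htier; omega
    exact ⟨H, ⟨hHG, hHc, hac h0⟩, hL⟩
  | succ k ih =>
    intro V _ G H X hHG hHc hL hXne htier
    obtain ⟨hle, _⟩ := aux_card_le H.edgeSet.ncard H hHc rfl
    have hmc : H.edgeSet.ncard + 1 = Nat.card V + (k + 1) := by
      unfold tier at htier; omega
    have hnac : ¬ H.IsAcyclic := by
      intro hacyc
      have := aux_tree_card ⟨hHc, hacyc⟩
      omega
    obtain ⟨x, hxX⟩ := hXne
    have hxdeg : deg H x = 1 := by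
      rw [← hL] at hxX; exact hxX
    obtain ⟨u, v, hadj, hdel, h2u, h3v⟩ := aux_sel hHc hnac hxdeg
    obtain ⟨H', hle', hconn', hleaves', hcount'⟩ :=
      aux_step hHG hHc hL hadj hdel h2u h3v
    have htier' : tier H' = k := by
      unfold tier
      rw [hcount', Nat.card_sum]
      simp only [Nat.card_eq_fintype_card, Fintype.card_fin]
      omega
    obtain ⟨B, hsteps, htb⟩ := ih (V ⊕ Fin 2) (addLeafG G u v) H'
      (Sum.inl '' X ∪ {Sum.inr 1}) hle' hconn' hleaves'
      ⟨Sum.inr 1, Or.inr rfl⟩ htier'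
    exact ⟨B, ⟨⟨V ⊕ Fin 2, addLeafG G u v, Sum.inl '' X ∪ {Sum.inr 1}⟩,
      ⟨u, v, hHG hadj, rfl⟩, hsteps⟩, htb⟩

end Aux

theorem stmt2 {V : Type} [Finite V] (G : SimpleGraph V) (X : Set V)
    (hphylo : IsPhylo G X) (hproper : IsProper G X) (hX : 2 ≤ X.ncard) :
    tMeasure ⟨V, G, X⟩ ≤ tauMeasure G X := by
  have hXne : X.Nonempty := by
    rcases Set.eq_empty_or_nonempty X with h | h
    · rw [h] at hX; simp at hX
    · exact h
  have hmem : tauMeasure G X ∈ {k | ∃ H, IsSupportNet G H X ∧ k = tier H} := by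
    apply Nat.sInf_mem
    exact ⟨tier G, G, ⟨le_refl G, hphylo.1, hphylo.2.2⟩, rfl⟩
  obtain ⟨H, hsup, htier⟩ := hmem
  obtain ⟨B, hsteps, htb⟩ :=
    aux_key (tauMeasure G X) V G H X hsup.1 hsup.2.1 hsup.2.2 hXne htier.symm
  exact Nat.sInf_le ⟨B, hsteps, htb⟩
end

section
/- Let N be a proper unrooted phylogenetic network on leaf set X with |X| ≥ 2. Then τ(N) ≤ ℓ(N), where τ(N) is the minimum tier of a support network of N and ℓ(N) is the minimum number of non-X leaves over all spanning trees of N. -/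
open SimpleGraph

/-!
Take a spanning tree `T` of `N` with `ℓ(N)` leaves outside `X`. A leaf `u ∉ X` of `T` is not a
leaf of `N`, so some edge of `N` at `u` is missing from `T`; adding one such edge at every such
leaf makes all of them non-leaves while the leaves of `T` in `X` keep degree one. The result is
a support network with at most `ℓ(N)` edges more than the tree, hence of tier at most `ℓ(N)`.
-/

section

variable {V : Type*} {G H T : SimpleGraph V} {X : Set V} {u v w : V}

lemma deg_mono [Finite V] (h : G ≤ H) (v : V) : deg G v ≤ deg H v :=
  Set.ncard_le_ncard (fun _ hw => h hw)

lemma deg_pos_iff [Finite V] : 0 < deg G v ↔ ∃ w, G.Adj v w :=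
  Set.ncard_pos

lemma two_le_deg [Finite V] (hu : G.Adj v u) (hw : G.Adj v w) (huw : u ≠ w) : 2 ≤ deg G v := by
  rw [← Set.ncard_pair huw]
  exact Set.ncard_le_ncard (Set.insert_subset hu (Set.singleton_subset_iff.mpr hw))

lemma SimpleGraph.Preconnected.deg_pos [Finite V] (hG : G.Preconnected) (hvw : v ≠ w) :
    0 < deg G v :=
  deg_pos_iff.mpr ((hG v w).nonempty_neighborSet_left hvw)

lemma SimpleGraph.IsTree.ncard_edgeSet_add_one [Finite V] (hT : T.IsTree) :
    T.edgeSet.ncard + 1 = Nat.card V :=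
  (isTree_iff_connected_and_card.mp hT).2

lemma exists_adj_not_adj_of_mem_leaves (hTG : T ≤ G) (hT : u ∈ leaves T) (hG : u ∉ leaves G) :
    ∃ w, G.Adj u w ∧ ¬ T.Adj u w := by
  by_contra! h
  have : G.neighborSet u = T.neighborSet u :=
    Set.Subset.antisymm (fun w hw => h w hw) (fun w hw => hTG hw)
  exact hG (show deg G u = 1 by rw [deg, this]; exact hT)

def attachLeafEdges (T : SimpleGraph V) (X : Set V) (f : V → V) : SimpleGraph V :=
  T ⊔ fromEdgeSet ((fun u => s(u, f u)) '' (leaves T \ X))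

section attachLeafEdges

variable {f : V → V}

lemma le_attachLeafEdges : T ≤ attachLeafEdges T X f := le_sup_left

lemma attachLeafEdges_adj_of_mem (hu : u ∈ leaves T \ X) (hfu : u ≠ f u) :
    (attachLeafEdges T X f).Adj u (f u) :=
  Or.inr ((fromEdgeSet_adj _).mpr ⟨⟨u, hu, rfl⟩, hfu⟩)

lemma attachLeafEdges_le (hTG : T ≤ G) (hf : ∀ u ∈ leaves T \ X, G.Adj u (f u)) :
    attachLeafEdges T X f ≤ G := by
  refine sup_le hTG fun a b hab => ?_
  obtain ⟨⟨u, hu, he⟩, -⟩ := (fromEdgeSet_adj _).mp hab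
  rcases Sym2.eq_iff.mp he with ⟨rfl, rfl⟩ | ⟨rfl, rfl⟩
  · exact hf u hu
  · exact (hf u hu).symm

lemma ncard_edgeSet_attachLeafEdges_le [Finite V] :
    (attachLeafEdges T X f).edgeSet.ncard ≤ T.edgeSet.ncard + (leaves T \ X).ncard := by
  rw [attachLeafEdges, edgeSet_sup, edgeSet_fromEdgeSet]
  refine (Set.ncard_union_le _ _).trans (Nat.add_le_add_left ?_ _)
  exact (Set.ncard_le_ncard Set.sdiff_subset).trans Set.ncard_image_le

lemma leaves_attachLeafEdges [Finite V] (hTG : T ≤ G) (hT : T.Connected) (hGX : leaves G = X)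
    (hf : ∀ u ∈ leaves T \ X, G.Adj u (f u) ∧ ¬ T.Adj u (f u)) :
    leaves (attachLeafEdges T X f) = X := by
  have hHG : attachLeafEdges T X f ≤ G := attachLeafEdges_le hTG fun u hu => (hf u hu).1
  have hTH : T ≤ attachLeafEdges T X f := le_attachLeafEdges
  ext v
  constructor
  · intro (hv : deg (attachLeafEdges T X f) v = 1)
    by_contra hvX
    obtain ⟨w, hvw⟩ := deg_pos_iff.mp (hv ▸ one_pos)
    have hTv : 0 < deg T v := hT.preconnected.deg_pos hvw.ne
    have : 2 ≤ deg (attachLeafEdges T X f) v := by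
      by_cases hvT : deg T v = 1
      · have hvL : v ∈ leaves T \ X := ⟨hvT, hvX⟩
        obtain ⟨t, hvt⟩ := deg_pos_iff.mp hTv
        exact two_le_deg (hTH hvt) (attachLeafEdges_adj_of_mem hvL (hf v hvL).1.ne)
          fun h => (hf v hvL).2 (h ▸ hvt)
      · exact (by omega : 2 ≤ deg T v).trans (deg_mono hTH v)
    omega
  · intro hvX
    have hGv : deg G v = 1 := by rwa [← hGX] at hvX
    obtain ⟨w, hvw⟩ := deg_pos_iff.mp (hGv ▸ one_pos)
    have := hT.preconnected.deg_pos hvw.ne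
    have := deg_mono hTH v
    have := deg_mono hHG v
    show deg _ v = 1
    omega

end attachLeafEdges

lemma tauMeasure_le_ncard_leaves_diff [Finite V] (hGX : leaves G = X)
    (hT : IsSpanningTree G T) : tauMeasure G X ≤ (leaves T \ X).ncard := by
  obtain ⟨hTG, hT⟩ := hT
  have : Nonempty V := hT.connected.nonempty
  have hextra : ∀ u ∈ leaves T \ X, ∃ w, G.Adj u w ∧ ¬ T.Adj u w := fun u hu =>
    exists_adj_not_adj_of_mem_leaves hTG hu.1 (hGX ▸ hu.2)
  choose! f hf using hextra
  have hH : IsSupportNet G (attachLeafEdges T X f) X :=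
    ⟨attachLeafEdges_le hTG fun u hu => (hf u hu).1, hT.connected.mono le_attachLeafEdges,
      leaves_attachLeafEdges hTG hT.connected hGX hf⟩
  have htier : tier (attachLeafEdges T X f) ≤ (leaves T \ X).ncard := by
    have := hT.ncard_edgeSet_add_one
    have := ncard_edgeSet_attachLeafEdges_le (T := T) (X := X) (f := f)
    unfold tier
    omega
  exact le_trans (Nat.sInf_le ⟨_, hH, rfl⟩) htier

end

theorem stmt3_general {V : Type*} [Finite V] (G : SimpleGraph V) (X : Set V)
    (hphylo : IsPhylo G X) :
    tauMeasure G X ≤ ell G X := by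
  obtain ⟨hconn, -, hGX⟩ := hphylo
  obtain ⟨T₀, hT₀G, hT₀⟩ := hconn.exists_isTree_le
  obtain ⟨T, hT, hell⟩ :
      ell G X ∈ {n | ∃ T, IsSpanningTree G T ∧ n = (leaves T \ X).ncard} :=
    Nat.sInf_mem ⟨_, T₀, ⟨hT₀G, hT₀⟩, rfl⟩
  exact hell ▸ tauMeasure_le_ncard_leaves_diff hGX hT

theorem stmt3 {V : Type*} [Finite V] (G : SimpleGraph V) (X : Set V)
    (hphylo : IsPhylo G X) (hproper : IsProper G X) (hX : 2 ≤ X.ncard) :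
    tauMeasure G X ≤ ell G X :=
  stmt3_general G X hphylo
end

section
/- Let N be a proper unrooted phylogenetic network on X. If the leaf cut graph LCUT(N) (obtained from N by deleting all leaves and their incident edges) has a Hamiltonian path, then ℓ(N) ≤ 2, i.e., N has a spanning tree with at most 2 leaves not in X. -/
open SimpleGraph

/-- A Hamiltonian path: a list of distinct consecutively adjacent vertices
containing every vertex. -/
def HasHamPath {W : Type*} (G : SimpleGraph W) : Prop :=
  ∃ l : List W, l.Nodup ∧ l.Chain' G.Adj ∧ ∀ w, w ∈ l

private lemma aux_reach_iff {V : Type*} {H : SimpleGraph V} {S : Set V}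
    (hS : ∀ a b, H.Adj a b → (a ∈ S ↔ b ∈ S)) {u v : V} (h : H.Reachable u v) :
    u ∈ S ↔ v ∈ S := by
  obtain ⟨w⟩ := h
  induction w with
  | nil => exact Iff.rfl
  | cons h p ih => exact (hS _ _ h).trans ih

private lemma aux_noadj {V : Type*} {H : SimpleGraph V} {a b : V}
    (h : ∀ y, ¬ H.Adj a y) (hne : a ≠ b) : ¬ H.Reachable a b := by
  intro hr
  obtain ⟨w⟩ := hr
  cases w with
  | nil => exact hne rfl
  | cons h' _ => exact h _ h'

/-- Consecutive elements of a list. -/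
private def Pc {V : Type*} (L : List V) (a b : V) : Prop :=
  ∃ (i : ℕ) (h : i + 1 < L.length), L[i]'(Nat.lt_of_succ_lt h) = a ∧ L[i+1]'h = b

private lemma Pc_def {V : Type*} {L : List V} {a b : V} :
    Pc L a b ↔ ∃ (i : ℕ) (h : i + 1 < L.length),
      L[i]'(Nat.lt_of_succ_lt h) = a ∧ L[i+1]'h = b := Iff.rfl

/-- The caterpillar tree: path `L` with pendant vertices `X` attached via `nbr`. -/
private def pathT {V : Type*} (L : List V) (X : Set V) (nbr : V → V) : SimpleGraph V where
  Adj a b := a ≠ b ∧ (Pc L a b ∨ Pc L b a ∨ (a ∈ X ∧ b = nbr a) ∨ (b ∈ X ∧ a = nbr b))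
  symm := ⟨by rintro a b ⟨hne, h⟩; exact ⟨hne.symm, by tauto⟩⟩
  loopless := ⟨by rintro a ⟨hne, -⟩; exact hne rfl⟩

private lemma pathT_adj {V : Type*} {L : List V} {X : Set V} {nbr : V → V} {a b : V} :
    (pathT L X nbr).Adj a b ↔
      a ≠ b ∧ (Pc L a b ∨ Pc L b a ∨ (a ∈ X ∧ b = nbr a) ∨ (b ∈ X ∧ a = nbr b)) := Iff.rfl

theorem stmt5 {V : Type*} [Finite V] (G : SimpleGraph V) (X : Set V)
    (hphylo : IsPhylo G X) (hproper : IsProper G X)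
    (hham : HasHamPath (G.induce {v | v ∉ X})) :
    ell G X ≤ 2 := by
  classical
  obtain ⟨hconn, hdeg2, hleaves⟩ := hphylo
  have hnbr_ex : ∀ x, x ∈ X → ∃ a, G.neighborSet x = {a} := by
    intro x hx
    rw [← hleaves] at hx
    exact Set.ncard_eq_one.mp hx
  choose! nbr hnbr using hnbr_ex
  have hGadj : ∀ x, x ∈ X → G.Adj x (nbr x) := by
    intro x hx
    have : nbr x ∈ G.neighborSet x := by rw [hnbr x hx]; rfl
    exact this
  have huniq : ∀ x, x ∈ X → ∀ y, G.Adj x y → y = nbr x := by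
    intro x hx y hy
    have : y ∈ G.neighborSet x := hy
    rwa [hnbr x hx] at this
  by_cases hXU : X = Set.univ
  · -- every vertex is a leaf; G itself is a tree and there are no non-X leaves
    have hXall : ∀ v : V, v ∈ X := fun v => hXU ▸ Set.mem_univ v
    have htree : G.IsTree := by
      refine ⟨hconn, ?_⟩
      rw [isAcyclic_iff_forall_adj_isBridge]
      intro a b hab
      refine isBridge_iff.mpr ?_
      refine aux_noadj ?_ hab.ne
      intro z hz
      rw [deleteEdges, sdiff_adj, fromEdgeSet_adj, Set.mem_singleton_iff] at hz
      obtain ⟨hGaz, hne⟩ := hz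
      have hz' : z = nbr a := huniq a (hXall a) z hGaz
      have hb' : b = nbr a := huniq a (hXall a) b hab
      exact hne ⟨by rw [hz', ← hb'], hGaz.ne⟩
    have h0 : (leaves G \ X).ncard = 0 := by
      rw [hXU, Set.diff_univ, Set.ncard_empty]
    refine le_trans (Nat.sInf_le ⟨G, ⟨le_refl G, htree⟩, rfl⟩) (by omega)
  · -- the interesting case: there is an internal vertex
    obtain ⟨v0, hv0⟩ := (Set.ne_univ_iff_exists_notMem X).mp hXU
    obtain ⟨l, hlnd, hlch, hlall⟩ := hham
    set L : List V := l.map Subtype.val with hLdef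
    have hLnd : L.Nodup := hlnd.map Subtype.val_injective
    have hLch : L.Chain' G.Adj := (List.isChain_map _).mpr hlch
    have hmemL : ∀ v, v ∉ X → v ∈ L := fun v hv => List.mem_map.mpr ⟨⟨v, hv⟩, hlall _, rfl⟩
    have hLX : ∀ v ∈ L, v ∉ X := by
      intro v hv
      obtain ⟨a, -, rfl⟩ := List.mem_map.mp hv
      exact a.2
    have hk : 0 < L.length := List.length_pos_iff.mpr (List.ne_nil_of_mem (hmemL v0 hv0))
    have hnbr_notX : ∀ x, x ∈ X → nbr x ∉ X := by
      intro x hx hnx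
      have hone : ∀ a b, G.Adj a b → a ∈ ({x, nbr x} : Set V) → b ∈ ({x, nbr x} : Set V) := by
        intro a b hab ha
        rcases ha with rfl | rfl
        · exact Or.inr (huniq a hx b hab)
        · have hb := huniq (nbr x) hnx b hab
          have hxx : x = nbr (nbr x) := huniq (nbr x) hnx x (hGadj x hx).symm
          exact Or.inl (by rw [hb, ← hxx])
      have hcl : ∀ a b, G.Adj a b → (a ∈ ({x, nbr x} : Set V) ↔ b ∈ ({x, nbr x} : Set V)) :=
        fun a b hab => ⟨hone a b hab, hone b a hab.symm⟩
      have : v0 ∈ ({x, nbr x} : Set V) :=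
        (aux_reach_iff hcl (hconn.preconnected x v0)).mp (Or.inl rfl)
      rcases this with rfl | rfl
      · exact hv0 hx
      · exact hv0 hnx
    set T : SimpleGraph V := pathT L X nbr with hTdef
    have hPc_adj : ∀ a b, Pc L a b → G.Adj a b := by
      rintro a b ⟨i, h, rfl, rfl⟩
      have := List.isChain_iff_getElem.mp hLch i (by omega)
      simpa using this
    have hTG : T ≤ G := by
      rintro a b ⟨hne, (h | h | ⟨hx, rfl⟩ | ⟨hx, rfl⟩)⟩
      · exact hPc_adj a b h
      · exact (hPc_adj b a h).symm
      · exact hGadj a hx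
      · exact (hGadj b hx).symm
    have hTX : ∀ x, x ∈ X → ∀ y, T.Adj x y → y = nbr x := fun x hx y h => huniq x hx y (hTG h)
    have hTadj_pc : ∀ (i : ℕ) (h : i + 1 < L.length),
        T.Adj (L[i]'(Nat.lt_of_succ_lt h)) (L[i+1]'h) := by
      intro i h
      refine ⟨?_, Or.inl ⟨i, h, rfl, rfl⟩⟩
      intro heq
      have := hLnd.getElem_inj_iff.mp heq
      omega
    have hTadj_nbr : ∀ x, x ∈ X → T.Adj x (nbr x) := fun x hx =>
      ⟨(hGadj x hx).ne, Or.inr (Or.inr (Or.inl ⟨hx, rfl⟩))⟩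
    have hreach : ∀ (i : ℕ) (hi : i < L.length), T.Reachable (L[0]'hk) (L[i]'hi) := by
      intro i
      induction i with
      | zero => intro hi; exact Reachable.refl _
      | succ n ih =>
        intro hi
        exact (ih (by omega)).trans (hTadj_pc n hi).reachable
    have hreachAll : ∀ v, T.Reachable (L[0]'hk) v := by
      intro v
      by_cases hv : v ∈ X
      · obtain ⟨i, hi, hEq⟩ := List.mem_iff_getElem.mp (hmemL _ (hnbr_notX v hv))
        exact (hEq ▸ hreach i hi).trans (hTadj_nbr v hv).symm.reachable
      · obtain ⟨i, hi, hEq⟩ := List.mem_iff_getElem.mp (hmemL v hv)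
        exact hEq ▸ hreach i hi
    have hTconn : T.Connected := by
      rw [connected_iff]
      exact ⟨fun u v => (hreachAll u).symm.trans (hreachAll v), ⟨L[0]'hk⟩⟩
    have hdel : ∀ (e : Sym2 V) (a b : V),
        (T \ fromEdgeSet {e}).Adj a b ↔ (T.Adj a b ∧ s(a,b) ≠ e) := by
      intro e a b
      rw [sdiff_adj, fromEdgeSet_adj, Set.mem_singleton_iff]
      constructor
      · rintro ⟨h1, h2⟩; exact ⟨h1, fun he => h2 ⟨he, h1.ne⟩⟩
      · rintro ⟨h1, h2⟩; exact ⟨h1, fun h => h2 h.1⟩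
    have key2 : ∀ x, x ∈ X → ¬ (T \ fromEdgeSet {s(x, nbr x)}).Reachable x (nbr x) := by
      intro x hx
      refine aux_noadj ?_ (hGadj x hx).ne
      intro z hz
      rw [hdel] at hz
      exact hz.2 (by rw [hTX x hx z hz.1])
    have key1 : ∀ (i : ℕ) (hi : i + 1 < L.length),
        ¬ (T \ fromEdgeSet {s(L[i]'(Nat.lt_of_succ_lt hi), L[i+1]'hi)}).Reachable
          (L[i]'(Nat.lt_of_succ_lt hi)) (L[i+1]'hi) := by
      intro i hi hr
      set S : Set V := {v | (∃ (j : ℕ) (hj : j < L.length), j ≤ i ∧ L[j]'hj = v) ∨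
        (v ∈ X ∧ ∃ (j : ℕ) (hj : j < L.length), j ≤ i ∧ L[j]'hj = nbr v)} with hSdef
      have hSL : ∀ (j : ℕ) (hj : j < L.length), (L[j]'hj ∈ S ↔ j ≤ i) := by
        intro j hj
        constructor
        · rintro (⟨j', hj', hle, hEq⟩ | ⟨hmem, -⟩)
          · have := hLnd.getElem_inj_iff.mp hEq
            omega
          · exact absurd hmem (hLX _ (List.getElem_mem _))
        · intro hle
          exact Or.inl ⟨j, hj, hle, rfl⟩
      have hSX : ∀ x, x ∈ X →
          (x ∈ S ↔ ∃ (j : ℕ) (hj : j < L.length), j ≤ i ∧ L[j]'hj = nbr x) := by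
        intro x hx
        constructor
        · rintro (⟨j', hj', hle, hEq⟩ | ⟨-, h⟩)
          · exact absurd hx (hEq ▸ hLX _ (List.getElem_mem _))
          · exact h
        · intro h
          exact Or.inr ⟨hx, h⟩
      have hXiff : ∀ x, x ∈ X → (x ∈ S ↔ nbr x ∈ S) := by
        intro x hx
        obtain ⟨jn, hjn, hEqn⟩ := List.mem_iff_getElem.mp (hmemL _ (hnbr_notX x hx))
        rw [hSX x hx]
        constructor
        · rintro ⟨j, hj, hle, hEq⟩
          have hj_eq : j = jn := hLnd.getElem_inj_iff.mp (hEq.trans hEqn.symm)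
          rw [← hEqn]
          exact (hSL jn hjn).mpr (by omega)
        · intro h
          rw [← hEqn] at h
          exact ⟨jn, hjn, (hSL jn hjn).mp h, hEqn⟩
      have hiff : ∀ u v,
          (T \ fromEdgeSet {s(L[i]'(Nat.lt_of_succ_lt hi), L[i+1]'hi)}).Adj u v →
          (u ∈ S ↔ v ∈ S) := by
        intro u v huv
        rw [hdel] at huv
        obtain ⟨⟨hne, hcases⟩, hne_e⟩ := huv
        rcases hcases with ⟨j, hj, rfl, rfl⟩ | ⟨j, hj, rfl, rfl⟩ | ⟨hx, rfl⟩ | ⟨hx, rfl⟩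
        · have hji : j ≠ i := by
            rintro rfl
            exact hne_e rfl
          rw [hSL j (Nat.lt_of_succ_lt hj), hSL (j+1) hj]
          omega
        · have hji : j ≠ i := by
            rintro rfl
            exact hne_e Sym2.eq_swap
          rw [hSL (j+1) hj, hSL j (Nat.lt_of_succ_lt hj)]
          omega
        · exact hXiff u hx
        · exact (hXiff v hx).symm
      have haS : (L[i]'(Nat.lt_of_succ_lt hi)) ∈ S := (hSL i (Nat.lt_of_succ_lt hi)).mpr le_rfl
      have hbS : (L[i+1]'hi) ∉ S := by
        rw [hSL (i+1) hi]
        omega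
      exact hbS ((aux_reach_iff hiff hr).mp haS)
    have hTacyc : T.IsAcyclic := by
      rw [isAcyclic_iff_forall_adj_isBridge]
      intro a b hab
      refine isBridge_iff.mpr ?_
      obtain ⟨hne, (h | h | ⟨hx, rfl⟩ | ⟨hx, rfl⟩)⟩ := hab
      · obtain ⟨i, hi, rfl, rfl⟩ := h
        exact key1 i hi
      · obtain ⟨i, hi, rfl, rfl⟩ := h
        intro hr
        rw [Sym2.eq_swap] at hr
        exact key1 i hi hr.symm
      · exact key2 a hx
      · intro hr
        rw [Sym2.eq_swap] at hr
        exact key2 b hx hr.symm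
    have hsub : leaves T \ X ⊆ {L[0]'hk, L[L.length - 1]'(by omega)} := by
      rintro v ⟨hvleaf, hvX⟩
      obtain ⟨i, hi, rfl⟩ := List.mem_iff_getElem.mp (hmemL v hvX)
      have hdegv : (T.neighborSet (L[i]'hi)).ncard = 1 := hvleaf
      by_cases h1 : i = 0
      · subst h1; exact Or.inl rfl
      by_cases h2 : i = L.length - 1
      · right
        simp only [Set.mem_singleton_iff]
        subst h2
        rfl
      exfalso
      obtain ⟨j, rfl⟩ : ∃ j, i = j + 1 := ⟨i - 1, by omega⟩
      obtain ⟨c, hc⟩ := Set.ncard_eq_one.mp hdegv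
      have hn1 : (L[j]'(by omega)) ∈ T.neighborSet (L[j+1]'hi) :=
        (hTadj_pc j (by omega)).symm
      have hn2 : (L[j+2]'(by omega)) ∈ T.neighborSet (L[j+1]'hi) :=
        hTadj_pc (j+1) (by omega)
      rw [hc, Set.mem_singleton_iff] at hn1 hn2
      have : j = j + 2 := hLnd.getElem_inj_iff.mp (hn1.trans hn2.symm)
      omega
    have hbound : (leaves T \ X).ncard ≤ 2 := by
      refine le_trans (Set.ncard_le_ncard hsub (Set.toFinite _)) ?_
      refine le_trans (Set.ncard_insert_le _ _) ?_
      simp [Set.ncard_singleton]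
    exact le_trans (Nat.sInf_le ⟨T, ⟨hTG, ⟨hTconn, hTacyc⟩⟩, rfl⟩) hbound
end

section
/- Let N be a proper unrooted phylogenetic network on X. Then ℓ(N) ≤ m(N), where ℓ(N) is the minimal number of non-X leaves over spanning trees of N, and m(N) = min over spanning trees T of |E(T) \ E(T_X)| with T_X the minimal subtree of T containing all leaves in X. -/
open SimpleGraph

/-- The edges of the spanning tree `T` lying on a path between two leaves in `X`:
an edge of the tree lies on the `x`–`y` path iff removing it separates `x` from `y`. -/
def TXedges {V : Type*} (T : SimpleGraph V) (X : Set V) : Set (Sym2 V) :=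
  {e | e ∈ T.edgeSet ∧ ∃ x ∈ X, ∃ y ∈ X, ¬ (T.deleteEdges {e}).Reachable x y}

/-- `m(N)`: minimal number of spanning-tree edges outside the minimal subtree spanning `X`. -/
noncomputable def mMeasure {V : Type*} (G : SimpleGraph V) (X : Set V) : ℕ :=
  sInf {n | ∃ T, IsSpanningTree G T ∧ n = (T.edgeSet \ TXedges T X).ncard}

section Aux

open SimpleGraph Walk

/-- Deleting a pendant edge at `v` does not disconnect vertices other than `v`. -/
lemma reach_of_delete_pendant {V : Type*} {T : SimpleGraph V} (hc : T.Connected)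
    {v u x y : V} (hu : T.neighborSet v = {u}) (hx : x ≠ v) (hy : y ≠ v) :
    (T.deleteEdges {s(v, u)}).Reachable x y := by
  classical
  obtain ⟨p0⟩ := hc.preconnected x y
  obtain ⟨p, hp⟩ := p0.toPath
  by_cases hvp : v ∈ p.support
  · exfalso
    set q := p.takeUntil v hvp with hq
    set r := p.dropUntil v hvp with hr
    have hqn : ¬ q.reverse.Nil := not_nil_of_ne (Ne.symm hx)
    have hau : q.reverse.getVert 1 = u := by
      have := (mem_neighborSet T v _).mpr (adj_snd hqn)
      rwa [hu, Set.mem_singleton_iff] at this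
    have h1 : u ∈ q.support := by
      have hmem : q.reverse.getVert 1 ∈ q.reverse.support :=
        mem_support_iff_exists_getVert.mpr ⟨1, rfl, not_nil_iff_lt_length.mp hqn⟩
      rw [support_reverse] at hmem
      exact List.mem_reverse.mp (hau ▸ hmem)
    have hrn : ¬ r.Nil := not_nil_of_ne (Ne.symm hy)
    have hbu : r.getVert 1 = u := by
      have := (mem_neighborSet T v _).mpr (adj_snd hrn)
      rwa [hu, Set.mem_singleton_iff] at this
    have h2 : u ∈ r.support.tail := by
      rw [← support_tail_of_not_nil r hrn]
      exact hbu ▸ start_mem_support r.tail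
    have hnodup := hp.support_nodup
    rw [← take_spec p hvp, support_append] at hnodup
    exact (List.disjoint_of_nodup_append hnodup) h1 h2
  · exact ⟨p.toDeleteEdges {s(v, u)} (fun e he hm => by
      rw [Set.mem_singleton_iff] at hm
      exact hvp (p.fst_mem_support_of_mem_edges (hm ▸ he)))⟩

/-- If two adjacent vertices are each other's unique neighbours in a connected
graph, then they are the only vertices. -/
lemma two_vertex {V : Type*} {T : SimpleGraph V} (hc : T.Connected) {v w : V}
    (hv : T.neighborSet v = {w}) (hw : T.neighborSet w = {v}) (z : V) : z = v ∨ z = w := by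
  classical
  by_contra h
  push_neg at h
  obtain ⟨hzv, hzw⟩ := h
  obtain ⟨p0⟩ := hc.preconnected v z
  obtain ⟨p, hp⟩ := p0.toPath
  have hnp : ¬ p.Nil := not_nil_of_ne (Ne.symm hzv)
  rcases not_nil_iff.mp hnp with ⟨u1, h1adj, q, rfl⟩
  have hu1 : u1 = w := by
    have := (mem_neighborSet T v u1).mpr h1adj
    rwa [hv, Set.mem_singleton_iff] at this
  subst hu1
  have hnq : ¬ q.Nil := not_nil_of_ne (Ne.symm hzw)
  rcases not_nil_iff.mp hnq with ⟨u2, h2adj, q2, rfl⟩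
  have hu2 : u2 = v := by
    have := (mem_neighborSet T _ u2).mpr h2adj
    rwa [hw, Set.mem_singleton_iff] at this
  subst hu2
  rw [Walk.cons_isPath_iff, Walk.cons_isPath_iff] at hp
  exact hp.2 (by simp)

lemma card_le_aux {V : Type*} [Finite V] (G T : SimpleGraph V) (X : Set V)
    (hle : T ≤ G) (htree : T.IsTree) (hG : leaves G = X) :
    (leaves T \ X).ncard ≤ (T.edgeSet \ TXedges T X).ncard := by
  classical
  have hc := htree.isConnected
  set nbr : V → V := fun v => if h : (T.neighborSet v).Nonempty then h.some else v with hnbrdef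
  have hnbr : ∀ v, deg T v = 1 → T.neighborSet v = {nbr v} := by
    intro v hv
    obtain ⟨u, hu⟩ := Set.ncard_eq_one.mp hv
    have hne : (T.neighborSet v).Nonempty := by rw [hu]; exact ⟨u, rfl⟩
    have hmem : nbr v ∈ T.neighborSet v := by
      simp only [hnbrdef, dif_pos hne]; exact hne.some_mem
    rw [hu] at hmem ⊢
    rw [Set.mem_singleton_iff.mp hmem]
  refine Set.ncard_le_ncard_of_injOn (fun v => s(v, nbr v)) ?_ ?_ (Set.toFinite _)
  · intro v hv
    obtain ⟨hv1, hv2⟩ := hv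
    have hns := hnbr v hv1
    have hadj : T.Adj v (nbr v) := by
      rw [← mem_neighborSet, hns]; exact rfl
    refine ⟨(T.mem_edgeSet).mpr hadj, ?_⟩
    rintro ⟨-, x, hx, y, hy, hnr⟩
    exact hnr (reach_of_delete_pendant hc hns
      (fun h => hv2 (h ▸ hx)) (fun h => hv2 (h ▸ hy)))
  · intro a ha b hb hab
    simp only [Sym2.eq_iff] at hab
    rcases hab with ⟨h, -⟩ | ⟨h1, h2⟩
    · exact h
    · exfalso
      have hna := hnbr a ha.1
      have hnb := hnbr b hb.1
      rw [h2] at hna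
      rw [← h1] at hnb
      have hadjT : T.Adj a b := by rw [← mem_neighborSet, hna]; exact rfl
      have hGnb : G.neighborSet a = {b} := by
        apply Set.eq_singleton_iff_unique_mem.mpr
        refine ⟨hle hadjT, fun z hz => ?_⟩
        rcases two_vertex hc hna hnb z with h | h
        · exact absurd (h ▸ hz : G.Adj a a) (G.loopless.irrefl a)
        · exact h
      have hl : a ∈ leaves G := by
        simp only [leaves, deg, Set.mem_setOf_eq, hGnb, Set.ncard_singleton]
      exact ha.2 (hG ▸ hl)

end Aux

theorem stmt12 {V : Type*} [Finite V] (G : SimpleGraph V) (X : Set V)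
    (hphylo : IsPhylo G X) (hproper : IsProper G X) :
    ell G X ≤ mMeasure G X := by
  classical
  by_cases h : {n | ∃ T, IsSpanningTree G T ∧ n = (T.edgeSet \ TXedges T X).ncard}.Nonempty
  · have hmem : mMeasure G X ∈
        {n | ∃ T, IsSpanningTree G T ∧ n = (T.edgeSet \ TXedges T X).ncard} := Nat.sInf_mem h
    obtain ⟨T, hT, hn⟩ := hmem
    calc ell G X ≤ (leaves T \ X).ncard := Nat.sInf_le ⟨T, hT, rfl⟩
      _ ≤ (T.edgeSet \ TXedges T X).ncard := card_le_aux G T X hT.1 hT.2 hphylo.2.2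
      _ = mMeasure G X := hn.symm
  · have h2 : {n | ∃ T, IsSpanningTree G T ∧ n = (leaves T \ X).ncard} = ∅ := by
      rw [Set.eq_empty_iff_forall_notMem]
      rintro n ⟨T, hT, -⟩
      exact h ⟨_, T, hT, rfl⟩
    unfold ell mMeasure
    rw [h2, Set.not_nonempty_iff_eq_empty.mp h]
end

section
/- If N^r is a phylogenetic refinement of a degenerate tree-based network D (obtained by replacing each degenerate vertex v̄, having in-degree > 1 and out-degree > 1, by two vertices v̄₁, v̄₂ and an arc (v̄₁, v̄₂), with all incoming arcs of v̄ redirected into v̄₁ and all outgoing arcs out of v̄₂), then N^r is also tree-based; moreover if D is phylogenetically tree-based then so is N^r. -/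
noncomputable def indeg {V : Type*} (A : V → V → Prop) (v : V) : ℕ := {u | A u v}.ncard
noncomputable def outdeg {V : Type*} (A : V → V → Prop) (v : V) : ℕ := {u | A v u}.ncard

/-- Acyclicity of a digraph: no directed cycle. -/
def Acyc {V : Type*} (A : V → V → Prop) : Prop := ∀ v, ¬ Relation.TransGen A v v

/-- A spanning arborescence (rooted spanning tree) `T` of the digraph `A`, rooted at `ρ`:
a subdigraph in which every non-root vertex has exactly one incoming arc and every
vertex is reachable from the root. -/
def IsArbor {V : Type*} (A T : V → V → Prop) (ρ : V) : Prop :=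
  (∀ u v, T u v → A u v) ∧ indeg T ρ = 0 ∧ (∀ v, v ≠ ρ → indeg T v = 1) ∧
  (∀ v, Relation.ReflTransGen T ρ v)

/-- Leaves (out-degree-0 vertices) of a rooted tree. -/
def arbLeaves {V : Type*} (T : V → V → Prop) : Set V := {v | outdeg T v = 0}

/-- A rooted network is tree-based if it has a rooted spanning tree with leaf set `X`. -/
def RootedTreeBased {V : Type*} (A : V → V → Prop) (ρ : V) (X : Set V) : Prop :=
  ∃ T, IsArbor A T ρ ∧ arbLeaves T = X

/-- Phylogenetically tree-based: some support tree's root has out-degree ≥ 2. -/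
def PhyloTreeBased {V : Type*} (A : V → V → Prop) (ρ : V) (X : Set V) : Prop :=
  ∃ T, IsArbor A T ρ ∧ arbLeaves T = X ∧ 2 ≤ outdeg T ρ

/-- A degenerate network: an acyclic digraph with root of in-degree 0 and out-degree ≥ 1,
leaves (in-degree 1, out-degree 0) exactly `X`, and internal vertices of in-degree ≥ 1
and out-degree ≥ 1 (vertices with both in- and out-degree > 1 are allowed). -/
def IsDegenerate {V : Type*} (A : V → V → Prop) (ρ : V) (X : Set V) : Prop :=
  Acyc A ∧ indeg A ρ = 0 ∧ 1 ≤ outdeg A ρ ∧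
  (∀ v, v ∈ X ↔ (indeg A v = 1 ∧ outdeg A v = 0)) ∧
  (∀ v, v ≠ ρ → v ∉ X → 1 ≤ indeg A v ∧ 1 ≤ outdeg A v)

/-- A degenerate vertex: both in-degree and out-degree greater than 1. -/
def DegenVert {V : Type*} (D : V → V → Prop) (v : V) : Prop :=
  2 ≤ indeg D v ∧ 2 ≤ outdeg D v

/-- The phylogenetic refinement of a degenerate network `D`: every degenerate vertex
`v̄` is replaced by two vertices `v̄₁ = inl v̄` (receiving all incoming arcs) and
`v̄₂ = inr v̄` (emitting all outgoing arcs), joined by the arc `(v̄₁, v̄₂)`. -/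
def refineD {V : Type*} (D : V → V → Prop) :
    (V ⊕ {v : V // DegenVert D v}) → (V ⊕ {v : V // DegenVert D v}) → Prop :=
  fun a b =>
    match a, b with
    | Sum.inl u, Sum.inl v => D u v ∧ ¬ DegenVert D u
    | Sum.inr u, Sum.inl v => D u.1 v
    | Sum.inl u, Sum.inr v => u = v.1
    | Sum.inr _, Sum.inr _ => False

/-!
Splitting each vertex `v` with `P v` into a head `inl v`, which keeps the incoming arcs, and a
tail `inr v`, which takes over the outgoing arcs, commutes with taking subdigraphs. Applied to a
support tree `T` it yields a spanning tree of the split network: in-degrees are those of `T`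
(and `1` at the new tails), and a split vertex becomes a head of out-degree one followed by a
tail carrying all its children. So as long as no split vertex is a leaf of `T`, the leaves and
the out-degree of an unsplit root are unchanged. Degenerate vertices are neither leaves nor the
root.
-/

open Relation

section VertexSplit

variable {V : Type*} (P : V → Prop)

def splitAt (T : V → V → Prop) : V ⊕ Subtype P → V ⊕ Subtype P → Prop
  | .inl u, .inl v => T u v ∧ ¬ P u
  | .inr u, .inl v => T u.1 v
  | .inl u, .inr v => u = v.1
  | .inr _, .inr _ => False

open Classical in
noncomputable def splitExit (v : V) : V ⊕ Subtype P :=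
  if h : P v then .inr ⟨v, h⟩ else .inl v

variable {P}

theorem refineD_eq_splitAt (D : V → V → Prop) : refineD D = splitAt (DegenVert D) D := by
  funext a b
  cases a <;> cases b <;> rfl

theorem splitAt_mono {S T : V → V → Prop} (h : ∀ u v, T u v → S u v) :
    ∀ a b, splitAt P T a b → splitAt P S a b
  | .inl _, .inl _, hab => ⟨h _ _ hab.1, hab.2⟩
  | .inr _, .inl _, hab => h _ _ hab
  | .inl _, .inr _, hab => hab
  | .inr _, .inr _, hab => hab

theorem splitExit_injective : Function.Injective (splitExit P) := by
  intro u v huv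
  unfold splitExit at huv
  split_ifs at huv <;> simpa using huv

theorem splitAt_splitExit_inl {T : V → V → Prop} {u v : V} :
    splitAt P T (splitExit P u) (.inl v) ↔ T u v := by
  unfold splitExit
  split_ifs with hu
  · rfl
  · exact and_iff_left hu

theorem reflTransGen_splitAt_inl_splitExit (T : V → V → Prop) (v : V) :
    ReflTransGen (splitAt P T) (.inl v) (splitExit P v) := by
  unfold splitExit
  split_ifs
  · exact .single rfl
  · exact .refl

theorem reflTransGen_splitAt_inl {T : V → V → Prop} {u v : V} (h : ReflTransGen T u v) :
    ReflTransGen (splitAt P T) (.inl u) (.inl v) := by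
  induction h with
  | refl => exact .refl
  | tail _ hbc ih =>
    exact (ih.trans (reflTransGen_splitAt_inl_splitExit T _)).tail
      (splitAt_splitExit_inl.2 hbc)

theorem setOf_splitAt_inl (T : V → V → Prop) (v : V) :
    {a | splitAt P T a (.inl v)} = splitExit P '' {u | T u v} := by
  ext a
  constructor
  · intro h
    cases a with
    | inl a => exact ⟨a, h.1, dif_neg h.2⟩
    | inr a => exact ⟨a.1, h, dif_pos a.2⟩
  · rintro ⟨u, hu, rfl⟩
    exact splitAt_splitExit_inl.2 hu

theorem indeg_splitAt_inl (T : V → V → Prop) (v : V) :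
    indeg (splitAt P T) (.inl v) = indeg T v := by
  rw [indeg, setOf_splitAt_inl, Set.ncard_image_of_injective _ splitExit_injective, indeg]

theorem indeg_splitAt_inr (T : V → V → Prop) (v : Subtype P) :
    indeg (splitAt P T) (.inr v) = 1 := by
  rw [indeg, Set.ncard_eq_one]
  refine ⟨.inl v.1, ?_⟩
  ext (a | a) <;> simp [splitAt, eq_comm]

theorem outdeg_splitAt_inl_of_not (T : V → V → Prop) {v : V} (hv : ¬ P v) :
    outdeg (splitAt P T) (.inl v) = outdeg T v := by
  have : {b | splitAt P T (.inl v) b} = Sum.inl '' {w | T v w} := by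
    ext (b | b)
    · simp [splitAt, hv]
    · simpa [splitAt] using fun h : v = b.1 => hv (h ▸ b.2)
  rw [outdeg, this, Set.ncard_image_of_injective _ Sum.inl_injective, outdeg]

theorem outdeg_splitAt_inl_of (T : V → V → Prop) {v : V} (hv : P v) :
    outdeg (splitAt P T) (.inl v) = 1 := by
  rw [outdeg, Set.ncard_eq_one]
  refine ⟨.inr ⟨v, hv⟩, ?_⟩
  ext (b | b) <;> simp [splitAt, hv, Subtype.ext_iff, eq_comm]

theorem outdeg_splitAt_inr (T : V → V → Prop) (v : Subtype P) :
    outdeg (splitAt P T) (.inr v) = outdeg T v := by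
  have : {b | splitAt P T (.inr v) b} = Sum.inl '' {w | T v w} := by
    ext (b | b) <;> simp [splitAt]
  rw [outdeg, this, Set.ncard_image_of_injective _ Sum.inl_injective, outdeg]

theorem isArbor_splitAt {S T : V → V → Prop} {ρ : V} (h : IsArbor S T ρ) :
    IsArbor (splitAt P S) (splitAt P T) (.inl ρ) := by
  obtain ⟨hsub, hroot, hin, hreach⟩ := h
  refine ⟨splitAt_mono hsub, by rw [indeg_splitAt_inl, hroot], ?_, ?_⟩
  · rintro (v | v) hv
    · rw [indeg_splitAt_inl]
      exact hin v (fun h => hv (h ▸ rfl))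
    · exact indeg_splitAt_inr T v
  · rintro (v | v)
    · exact reflTransGen_splitAt_inl (hreach v)
    · exact (reflTransGen_splitAt_inl (hreach v.1)).tail rfl

theorem arbLeaves_splitAt {T : V → V → Prop} (h : ∀ v, P v → v ∉ arbLeaves T) :
    arbLeaves (splitAt P T) = Sum.inl '' arbLeaves T := by
  ext (v | v)
  · by_cases hv : P v
    · simpa [arbLeaves, outdeg_splitAt_inl_of T hv] using h v hv
    · simp [arbLeaves, outdeg_splitAt_inl_of_not T hv]
  · simpa [arbLeaves, outdeg_splitAt_inr] using h v.1 v.2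

end VertexSplit

theorem stmt15_general {V : Type*} (D : V → V → Prop) (ρ : V) (X : Set V)
    (hD : IsDegenerate D ρ X) (hTB : RootedTreeBased D ρ X) :
    RootedTreeBased (refineD D) (Sum.inl ρ) (Sum.inl '' X) ∧
    (PhyloTreeBased D ρ X →
      PhyloTreeBased (refineD D) (Sum.inl ρ) (Sum.inl '' X)) := by
  obtain ⟨-, hρin, -, hX, -⟩ := hD
  have hρ : ¬ DegenVert D ρ := fun h => by have := h.1; omega
  have hleaves {T : V → V → Prop} (hT : arbLeaves T = X) (v : V) (hv : DegenVert D v) :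
      v ∉ arbLeaves T := fun hvT => by
    have := ((hX v).1 (hT ▸ hvT)).2
    have := hv.2
    omega
  rw [refineD_eq_splitAt]
  obtain ⟨T, hT, hTX⟩ := hTB
  refine ⟨⟨_, isArbor_splitAt hT, by rw [arbLeaves_splitAt (hleaves hTX), hTX]⟩, ?_⟩
  rintro ⟨T', hT', hT'X, hroot⟩
  refine ⟨_, isArbor_splitAt hT', by rw [arbLeaves_splitAt (hleaves hT'X), hT'X], ?_⟩
  rwa [outdeg_splitAt_inl_of_not T' hρ]

theorem stmt15 {V : Type*} [Finite V] (D : V → V → Prop) (ρ : V) (X : Set V)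
    (hD : IsDegenerate D ρ X) (hTB : RootedTreeBased D ρ X) :
    RootedTreeBased (refineD D) (Sum.inl ρ) (Sum.inl '' X) ∧
    (PhyloTreeBased D ρ X →
      PhyloTreeBased (refineD D) (Sum.inl ρ) (Sum.inl '' X)) :=
  stmt15_general D ρ X hD hTB
end

section
/- A binary unrooted proper phylogenetic network N on X is tree-based if and only if it can be rooted at the midpoint of an edge, with orientations on all edges, to give a binary rooted phylogenetic network N^r that is phylogenetically tree-based (has a support tree whose root has out-degree 2). -/
open SimpleGraph

/-- Subdividing the edge `{u,v}` of `G` with a new (root) vertex `inr ()`. -/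
def subdivRoot {V : Type*} (G : SimpleGraph V) (u v : V) : SimpleGraph (V ⊕ Unit) :=
  SimpleGraph.fromEdgeSet ((Sym2.map Sum.inl '' (G.edgeSet \ {s(u, v)})) ∪
    {s(Sum.inl u, Sum.inr ()), s(Sum.inl v, Sum.inr ())})

/-- `A` is an orientation of the simple graph `H`. -/
def IsOrientation {W : Type*} (H : SimpleGraph W) (A : W → W → Prop) : Prop :=
  (∀ a b, A a b → H.Adj a b ∧ ¬ A b a) ∧ (∀ a b, H.Adj a b → A a b ∨ A b a)

/-- A binary unrooted phylogenetic network: all internal vertices have degree 3. -/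
def IsBinaryPhylo {V : Type*} (G : SimpleGraph V) (X : Set V) : Prop :=
  IsPhylo G X ∧ ∀ v, v ∉ X → deg G v = 3

/-- A binary rooted phylogenetic network: root of in-degree 0 and out-degree 2, leaves
(in-degree 1, out-degree 0) exactly `X`, tree vertices (1,2) and reticulations (2,1). -/
def IsBinaryRootedPhylo {V : Type*} (A : V → V → Prop) (ρ : V) (X : Set V) : Prop :=
  Acyc A ∧ indeg A ρ = 0 ∧ outdeg A ρ = 2 ∧
  (∀ v, v ∈ X ↔ (indeg A v = 1 ∧ outdeg A v = 0)) ∧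
  (∀ v, v ≠ ρ → v ∉ X →
    (indeg A v = 1 ∧ outdeg A v = 2) ∨ (indeg A v = 2 ∧ outdeg A v = 1)) ∧
  (∀ v, Relation.ReflTransGen A ρ v)

section Helpers

lemma acyc_of_rank {W : Type*} {T : W → W → Prop} (φ : W → ℕ)
    (h : ∀ x y, T x y → φ x < φ y) : Acyc T := by
  have key : ∀ a b, Relation.TransGen T a b → φ a < φ b := by
    intro a b hab
    induction hab with
    | single h' => exact h _ _ h'
    | tail _ h' ih => exact ih.trans (h _ _ h')
  exact fun v hv => lt_irrefl _ (key v v hv)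

lemma transgen_of_rtg_ne {W : Type*} {T : W → W → Prop} {a b : W}
    (h : Relation.ReflTransGen T a b) (hne : a ≠ b) : Relation.TransGen T a b := by
  rcases Relation.reflTransGen_iff_eq_or_transGen.mp h with rfl | h'
  · exact absurd rfl hne
  · exact h'

lemma rtg_antisymm {W : Type*} {T : W → W → Prop} (hA : Acyc T) {a b : W}
    (h1 : Relation.ReflTransGen T a b) (h2 : Relation.ReflTransGen T b a) : a = b := by
  by_contra hne
  exact hA a ((transgen_of_rtg_ne h1 hne).trans (transgen_of_rtg_ne h2 (Ne.symm hne)))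

lemma orient_deg {W : Type*} [Finite W] {H : SimpleGraph W} {A : W → W → Prop}
    (ho : IsOrientation H A) (y : W) : indeg A y + outdeg A y = deg H y := by
  have hset : H.neighborSet y = {x | A x y} ∪ {x | A y x} := by
    ext x
    simp only [mem_neighborSet, Set.mem_union, Set.mem_setOf_eq]
    constructor
    · intro hx
      rcases ho.2 _ _ hx.symm with h | h
      · exact Or.inl h
      · exact Or.inr h
    · rintro (h | h)
      · exact ((ho.1 _ _ h).1).symm
      · exact (ho.1 _ _ h).1
  have hdisj : Disjoint {x | A x y} {x | A y x} := by
    rw [Set.disjoint_left]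
    intro x h1 h2
    exact (ho.1 _ _ h1).2 h2
  rw [deg, hset, Set.ncard_union_eq hdisj (Set.toFinite _) (Set.toFinite _)]
  rfl

lemma list_max {W : Type*} {l : W → W → Prop} (htot : ∀ a b, l a b ∨ l b a)
    (htrans : ∀ a b c, l a b → l b c → l a c) :
    ∀ L : List W, L ≠ [] → ∃ m ∈ L, ∀ z ∈ L, l z m := by
  have hrefl : ∀ a, l a a := fun a => (htot a a).elim id id
  intro L
  induction L with
  | nil => intro h; exact absurd rfl h
  | cons a L ih =>
    intro _
    rcases eq_or_ne L [] with rfl | hL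
    · refine ⟨a, by simp, ?_⟩
      intro z hz
      simp only [List.mem_singleton] at hz
      subst hz
      exact hrefl _
    · obtain ⟨m, hm, hmax⟩ := ih hL
      rcases htot a m with h | h
      · refine ⟨m, List.mem_cons_of_mem _ hm, ?_⟩
        intro z hz
        rcases List.mem_cons.mp hz with rfl | hz
        · exact h
        · exact hmax z hz
      · refine ⟨a, List.mem_cons_self, ?_⟩
        intro z hz
        rcases List.mem_cons.mp hz with rfl | hz
        · exact hrefl z
        · exact htrans _ _ _ (hmax z hz) h

lemma subdivRoot_adj {V : Type*} {G : SimpleGraph V} {u v : V} (huv : u ≠ v)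
    (x y : V ⊕ Unit) :
    (subdivRoot G u v).Adj x y ↔
      (∃ a b, x = Sum.inl a ∧ y = Sum.inl b ∧ G.Adj a b ∧ s(a, b) ≠ s(u, v)) ∨
      (x = Sum.inr () ∧ (y = Sum.inl u ∨ y = Sum.inl v)) ∨
      (y = Sum.inr () ∧ (x = Sum.inl u ∨ x = Sum.inl v)) := by
  rw [subdivRoot, fromEdgeSet_adj]
  constructor
  · rintro ⟨hmem, hne⟩
    rcases hmem with ⟨e, ⟨he, hne'⟩, heq⟩ | hmem
    · induction e with
      | h a b =>
        simp only [Sym2.map_pair_eq, Sym2.eq_iff] at heq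
        rcases heq with ⟨rfl, rfl⟩ | ⟨rfl, rfl⟩
        · exact Or.inl ⟨a, b, rfl, rfl, he, fun hc => hne' (by rwa [Set.mem_singleton_iff])⟩
        · refine Or.inl ⟨b, a, rfl, rfl, he.symm, fun hc => hne' ?_⟩
          simp only [Set.mem_singleton_iff] at hc ⊢
          rw [Sym2.eq_swap] at hc
          exact hc
    · simp only [Set.mem_insert_iff, Set.mem_singleton_iff, Sym2.eq_iff] at hmem
      rcases hmem with (⟨rfl, rfl⟩ | ⟨rfl, rfl⟩) | (⟨rfl, rfl⟩ | ⟨rfl, rfl⟩)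
      · exact Or.inr (Or.inr ⟨rfl, Or.inl rfl⟩)
      · exact Or.inr (Or.inl ⟨rfl, Or.inl rfl⟩)
      · exact Or.inr (Or.inr ⟨rfl, Or.inr rfl⟩)
      · exact Or.inr (Or.inl ⟨rfl, Or.inr rfl⟩)
  · rintro (⟨a, b, rfl, rfl, hab, hne⟩ | ⟨rfl, (rfl | rfl)⟩ | ⟨rfl, (rfl | rfl)⟩)
    · refine ⟨Or.inl ⟨s(a, b), ⟨hab, by simpa using hne⟩, by simp⟩, by simp [hab.ne]⟩
    · exact ⟨Or.inr (by simp [Sym2.eq_swap]), by simp⟩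
    · exact ⟨Or.inr (by simp [Sym2.eq_swap]), by simp⟩
    · exact ⟨Or.inr (by simp), by simp⟩
    · exact ⟨Or.inr (by simp), by simp⟩

end Helpers
section TreeHelpers
variable {V : Type*} {T : SimpleGraph V}

lemma exists_concat_of_pos {u w : V} {p : T.Walk u w} (hp : 0 < p.length) :
    ∃ (a : V) (q : T.Walk u a) (h : T.Adj a w), p = q.concat h := by
  induction p using SimpleGraph.Walk.concatRec with
  | Hnil => simp at hp
  | Hconcat q h _ => exact ⟨_, q, h, rfl⟩

lemma isPath_concat {x y z : V} {p : T.Walk x y} (hp : p.IsPath)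
    (h : T.Adj y z) (hz : z ∉ p.support) : (p.concat h).IsPath := by
  rw [← SimpleGraph.Walk.isPath_reverse_iff, SimpleGraph.Walk.reverse_concat,
    SimpleGraph.Walk.cons_isPath_iff]
  exact ⟨hp.reverse, by simpa [SimpleGraph.Walk.support_reverse] using hz⟩

lemma dist_lt_of_mem_support_shortest {u w z : V} (p : T.Walk u w)
    (hlen : p.length = T.dist u w) (hz : z ∈ p.support) (hzw : z ≠ w) :
    T.dist u z < T.dist u w := by
  classical
  have h1 : T.dist u z ≤ (p.takeUntil z hz).length := SimpleGraph.dist_le _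
  have h2 : 0 < (p.dropUntil z hz).length :=
    SimpleGraph.Walk.not_nil_iff_lt_length.mp (SimpleGraph.Walk.not_nil_of_ne hzw)
  have h3 : (p.takeUntil z hz).length + (p.dropUntil z hz).length = p.length := by
    have := congrArg SimpleGraph.Walk.length (p.take_spec hz)
    rwa [SimpleGraph.Walk.length_append] at this
  omega

lemma tree_parent_exists (hc : T.Connected) {u w : V} (hw : w ≠ u) :
    ∃ a, T.Adj a w ∧ T.dist u a + 1 = T.dist u w := by
  obtain ⟨p, hp⟩ := (hc u w).exists_walk_length_eq_dist
  have hpos : 0 < p.length := by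
    rw [hp]; exact hc.pos_dist_of_ne (Ne.symm hw)
  obtain ⟨a, q, h, rfl⟩ := exists_concat_of_pos hpos
  refine ⟨a, h, ?_⟩
  have h1 : T.dist u a ≤ q.length := SimpleGraph.dist_le q
  have h2 : (q.concat h).length = q.length + 1 := SimpleGraph.Walk.length_concat q h
  have h3 : T.dist u w ≤ T.dist u a + T.dist a w := hc.dist_triangle
  have h4 : T.dist a w = 1 := SimpleGraph.dist_eq_one_iff_adj.mpr h
  omega

lemma tree_adj_dist_ne (hT : T.IsTree) (u : V) {w z : V} (h : T.Adj w z) :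
    T.dist u w ≠ T.dist u z := by
  intro heq
  obtain ⟨p, hp⟩ := (hT.isConnected u w).exists_walk_length_eq_dist
  have hzp : z ∉ p.support := by
    intro hz
    have := dist_lt_of_mem_support_shortest p hp hz h.ne'
    omega
  have hpath : (p.concat h).IsPath :=
    isPath_concat (p.isPath_of_length_eq_dist hp) h hzp
  obtain ⟨q, hq⟩ := (hT.isConnected u z).exists_walk_length_eq_dist
  have hqpath : q.IsPath := q.isPath_of_length_eq_dist hq
  have := (hT.existsUnique_path u z).unique hpath hqpath
  have hlen := congrArg SimpleGraph.Walk.length this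
  rw [SimpleGraph.Walk.length_concat] at hlen
  omega

lemma tree_parent_unique (hT : T.IsTree) (u : V) {w a b : V}
    (ha : T.Adj a w) (hb : T.Adj b w) (hda : T.dist u a + 1 = T.dist u w)
    (hdb : T.dist u b + 1 = T.dist u w) : a = b := by
  classical
  obtain ⟨p, hp⟩ := (hT.isConnected u a).exists_walk_length_eq_dist
  obtain ⟨q, hq⟩ := (hT.isConnected u b).exists_walk_length_eq_dist
  have hwp : w ∉ p.support := by
    intro hw
    have h1 : T.dist u w ≤ (p.takeUntil w hw).length := SimpleGraph.dist_le _
    have h2 := SimpleGraph.Walk.length_takeUntil_le p hw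
    omega
  have hwq : w ∉ q.support := by
    intro hw
    have h1 : T.dist u w ≤ (q.takeUntil w hw).length := SimpleGraph.dist_le _
    have h2 := SimpleGraph.Walk.length_takeUntil_le q hw
    omega
  have hP : (p.concat ha).IsPath := isPath_concat (p.isPath_of_length_eq_dist hp) ha hwp
  have hQ : (q.concat hb).IsPath := isPath_concat (q.isPath_of_length_eq_dist hq) hb hwq
  have heq := (hT.existsUnique_path u w).unique hP hQ
  obtain ⟨hv, -⟩ := SimpleGraph.Walk.concat_inj heq
  exact hv

lemma exists_adj_of_ne (hc : T.Connected) {w z : V} (hne : z ≠ w) : ∃ a, T.Adj w a := by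
  obtain ⟨p⟩ := hc w z
  cases p with
  | nil => exact absurd rfl hne
  | cons h q => exact ⟨_, h⟩

end TreeHelpers

section Forward
variable {V : Type*}

/-- Orientation of a tree away from root `u`. -/
def Rrel (T : SimpleGraph V) (u : V) (a b : V) : Prop :=
  T.Adj a b ∧ T.dist u a + 1 = T.dist u b

/-- The arborescence on the subdivision. -/
def T0rel (T : SimpleGraph V) (u v : V) (x y : V ⊕ Unit) : Prop :=
  (x = Sum.inr () ∧ (y = Sum.inl u ∨ y = Sum.inl v)) ∨
  (∃ a b : V, x = Sum.inl a ∧ y = Sum.inl b ∧ Rrel T u a b ∧ s(a, b) ≠ s(u, v))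

variable {T : SimpleGraph V} {u v : V}

lemma fwd_acyc : Acyc (T0rel T u v) := by
  apply acyc_of_rank (Sum.elim (fun w => T.dist u w + 1) (fun _ => 0))
  rintro x y (⟨rfl, (rfl | rfl)⟩ | ⟨a, b, rfl, rfl, ⟨-, hd⟩, -⟩) <;> simp <;> omega

lemma fwd_in_rho : {x | T0rel T u v x (Sum.inr ())} = ∅ := by
  ext x
  simp only [Set.mem_setOf_eq, Set.mem_empty_iff_false, iff_false, T0rel]
  rintro (⟨rfl, (h | h)⟩ | ⟨a, b, rfl, h, -, -⟩) <;> simp at h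

lemma fwd_out_rho : {y | T0rel T u v (Sum.inr ()) y} = {Sum.inl u, Sum.inl v} := by
  ext y
  simp only [Set.mem_setOf_eq, Set.mem_insert_iff, Set.mem_singleton_iff, T0rel]
  constructor
  · rintro (⟨-, h⟩ | ⟨a, b, h, -, -, -⟩)
    · exact h
    · simp at h
  · intro h
    exact Or.inl ⟨trivial, h⟩

lemma fwd_Ruv (hadjT : T.Adj u v) : Rrel T u u v := by
  refine ⟨hadjT, ?_⟩
  rw [SimpleGraph.dist_self, SimpleGraph.dist_eq_one_iff_adj.mpr hadjT]

lemma fwd_no_R_to_root (a : V) : ¬ Rrel T u a u := by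
  rintro ⟨-, hd⟩
  rw [SimpleGraph.dist_self] at hd
  omega

lemma fwd_in_u : {x | T0rel T u v x (Sum.inl u)} = {Sum.inr ()} := by
  ext x
  simp only [Set.mem_setOf_eq, Set.mem_singleton_iff, T0rel]
  constructor
  · rintro (⟨rfl, -⟩ | ⟨a, b, rfl, hb, hR, -⟩)
    · rfl
    · rw [Sum.inl.injEq] at hb
      subst hb
      exact absurd hR (fwd_no_R_to_root a)
  · rintro rfl
    simp [T0rel]

lemma fwd_in_v (hT : T.IsTree) (hadjT : T.Adj u v) :
    {x | T0rel T u v x (Sum.inl v)} = {Sum.inr ()} := by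
  ext x
  simp only [Set.mem_setOf_eq, Set.mem_singleton_iff, T0rel]
  constructor
  · rintro (⟨rfl, -⟩ | ⟨a, b, rfl, hb, hR, hs⟩)
    · rfl
    · rw [Sum.inl.injEq] at hb
      subst hb
      have huv := fwd_Ruv hadjT
      have : a = u := tree_parent_unique hT u hR.1 huv.1 hR.2 huv.2
      subst this
      exact absurd rfl hs
  · rintro rfl
    simp [T0rel]

lemma fwd_in_other (hT : T.IsTree) {w : V} (hwu : w ≠ u) (hwv : w ≠ v) :
    ∃ a : V, {x | T0rel T u v x (Sum.inl w)} = {Sum.inl a} := by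
  obtain ⟨a, haw, hd⟩ := tree_parent_exists hT.isConnected hwu
  refine ⟨a, ?_⟩
  ext x
  simp only [Set.mem_setOf_eq, Set.mem_singleton_iff, T0rel]
  constructor
  · rintro (⟨rfl, (h | h)⟩ | ⟨a', b, rfl, hb, hR, -⟩)
    · rw [Sum.inl.injEq] at h; exact absurd h hwu
    · rw [Sum.inl.injEq] at h; exact absurd h hwv
    · rw [Sum.inl.injEq] at hb
      subst hb
      rw [Sum.inl.injEq]
      exact tree_parent_unique hT u hR.1 haw hR.2 hd
  · rintro rfl
    refine Or.inr ⟨a, w, rfl, rfl, ⟨haw, hd⟩, ?_⟩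
    intro hs
    rw [Sym2.eq_iff] at hs
    rcases hs with ⟨-, h1⟩ | ⟨-, h1⟩
    · exact hwv h1
    · exact hwu h1

lemma fwd_reach (hT : T.IsTree) (hadjT : T.Adj u v) :
    ∀ y, Relation.ReflTransGen (T0rel T u v) (Sum.inr ()) y := by
  have key : ∀ (n : ℕ) (w : V), T.dist u w = n →
      Relation.ReflTransGen (T0rel T u v) (Sum.inr ()) (Sum.inl w) := by
    intro n
    induction n using Nat.strong_induction_on with
    | _ n ih =>
      intro w hw
      by_cases hwu : w = u
      · subst hwu
        exact Relation.ReflTransGen.single (Or.inl ⟨rfl, Or.inl rfl⟩)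
      by_cases hwv : w = v
      · subst hwv
        exact Relation.ReflTransGen.single (Or.inl ⟨rfl, Or.inr rfl⟩)
      obtain ⟨a, haw, hd⟩ := tree_parent_exists hT.isConnected hwu
      have hlt : T.dist u a < n := by omega
      have hprev := ih _ hlt a rfl
      refine hprev.tail (Or.inr ⟨a, w, rfl, rfl, ⟨haw, hd⟩, ?_⟩)
      intro hs
      rw [Sym2.eq_iff] at hs
      rcases hs with ⟨-, h1⟩ | ⟨-, h1⟩
      · exact hwv h1
      · exact hwu h1
  rintro (w | ⟨⟩)
  · exact key _ w rfl
  · exact Relation.ReflTransGen.refl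

lemma fwd_out_inl [Finite V] (hT : T.IsTree) (hadjT : T.Adj u v) (w : V) :
    {y | T0rel T u v (Sum.inl w) y}.ncard + 1 = deg T w := by
  have huv : u ≠ v := hadjT.ne
  have himg : {y | T0rel T u v (Sum.inl w) y} =
      Sum.inl '' {b | Rrel T u w b ∧ s(w, b) ≠ s(u, v)} := by
    ext y
    simp only [Set.mem_setOf_eq, Set.mem_image, T0rel]
    constructor
    · rintro (⟨h, -⟩ | ⟨a, b, ha, rfl, hR, hs⟩)
      · simp at h
      · rw [Sum.inl.injEq] at ha
        subst ha
        exact ⟨b, ⟨hR, hs⟩, rfl⟩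
    · rintro ⟨b, ⟨hR, hs⟩, rfl⟩
      exact Or.inr ⟨w, b, rfl, rfl, hR, hs⟩
  have hsplit : T.neighborSet w = {a | Rrel T u a w} ∪ {b | Rrel T u w b} := by
    ext z
    simp only [mem_neighborSet, Set.mem_union, Set.mem_setOf_eq]
    constructor
    · intro hz
      have hne := tree_adj_dist_ne hT u hz
      have h1 : T.dist u z ≤ T.dist u w + 1 := by
        have := hT.isConnected.dist_triangle (u := u) (v := w) (w := z)
        rw [SimpleGraph.dist_eq_one_iff_adj.mpr hz] at this
        omega
      have h2 : T.dist u w ≤ T.dist u z + 1 := by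
        have := hT.isConnected.dist_triangle (u := u) (v := z) (w := w)
        rw [SimpleGraph.dist_eq_one_iff_adj.mpr hz.symm] at this
        omega
      rcases (by omega : T.dist u z + 1 = T.dist u w ∨ T.dist u w + 1 = T.dist u z) with h | h
      · exact Or.inl ⟨hz.symm, h⟩
      · exact Or.inr ⟨hz, h⟩
    · rintro (⟨h, -⟩ | ⟨h, -⟩)
      · exact h.symm
      · exact h
  have hdisj : Disjoint {a | Rrel T u a w} {b | Rrel T u w b} := by
    rw [Set.disjoint_left]
    rintro a ⟨-, h1⟩ ⟨-, h2⟩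
    omega
  have hdeg : deg T w = {a | Rrel T u a w}.ncard + {b | Rrel T u w b}.ncard := by
    rw [deg, hsplit, Set.ncard_union_eq hdisj (Set.toFinite _) (Set.toFinite _)]
  rw [himg, Set.ncard_image_of_injective _ Sum.inl_injective, hdeg]
  by_cases hwu : w = u
  · subst hwu
    have h0 : {a | Rrel T w a w} = ∅ := by
      ext a
      simp only [Set.mem_setOf_eq, Set.mem_empty_iff_false, iff_false]
      exact fwd_no_R_to_root a
    have hminus : {b | Rrel T w w b ∧ s(w, b) ≠ s(w, v)} = {b | Rrel T w w b} \ {v} := by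
      ext b
      simp only [Set.mem_setOf_eq, Set.mem_diff, Set.mem_singleton_iff]
      constructor
      · rintro ⟨hR, hs⟩
        exact ⟨hR, fun h => hs (by rw [h])⟩
      · rintro ⟨hR, hb⟩
        refine ⟨hR, fun hs => ?_⟩
        rw [Sym2.eq_iff] at hs
        rcases hs with ⟨-, h1⟩ | ⟨h1, -⟩
        · exact hb h1
        · exact huv h1
    have hmem : v ∈ {b | Rrel T w w b} := fwd_Ruv hadjT
    rw [h0, Set.ncard_empty, hminus, Set.ncard_diff_singleton_add_one hmem]
    omega
  by_cases hwv : w = v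
  · subst hwv
    have hall : {b | Rrel T u w b ∧ s(w, b) ≠ s(u, w)} = {b | Rrel T u w b} := by
      ext b
      simp only [Set.mem_setOf_eq, and_iff_left_iff_imp]
      intro hR hs
      rw [Sym2.eq_iff] at hs
      rcases hs with ⟨h1, -⟩ | ⟨-, h1⟩
      · exact huv h1.symm
      · rw [h1] at hR
        exact fwd_no_R_to_root w hR
    have hone : {a | Rrel T u a w} = {u} := by
      ext a
      simp only [Set.mem_setOf_eq, Set.mem_singleton_iff]
      constructor
      · intro hR
        exact tree_parent_unique hT u hR.1 (fwd_Ruv hadjT).1 hR.2 (fwd_Ruv hadjT).2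
      · rintro rfl
        exact fwd_Ruv hadjT
    rw [hall, hone, Set.ncard_singleton]
    omega
  · have hall : {b | Rrel T u w b ∧ s(w, b) ≠ s(u, v)} = {b | Rrel T u w b} := by
      ext b
      simp only [Set.mem_setOf_eq, and_iff_left_iff_imp]
      intro hR hs
      rw [Sym2.eq_iff] at hs
      rcases hs with ⟨h1, -⟩ | ⟨h1, -⟩
      · exact hwu h1
      · exact hwv h1
    obtain ⟨a, haw, hd⟩ := tree_parent_exists hT.isConnected hwu
    have hone : {a' | Rrel T u a' w} = {a} := by
      ext a'
      simp only [Set.mem_setOf_eq, Set.mem_singleton_iff]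
      constructor
      · intro hR
        exact tree_parent_unique hT u hR.1 haw hR.2 hd
      · rintro rfl
        exact ⟨haw, hd⟩
    rw [hall, hone, Set.ncard_singleton]
    omega

end Forward

section ForwardMain
open Relation

lemma fwd_degH {V : Type*} [Finite V] {G : SimpleGraph V} {u v : V}
    (huv : u ≠ v) (hadj : G.Adj u v) (w : V) :
    deg (subdivRoot G u v) (Sum.inl w) = deg G w := by
  by_cases hwu : w = u
  · subst hwu
    have hN : (subdivRoot G w v).neighborSet (Sum.inl w) =
        insert (Sum.inr () : V ⊕ Unit) (Sum.inl '' (G.neighborSet w \ {v})) := by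
      ext y
      simp only [mem_neighborSet, Set.mem_insert_iff, Set.mem_image, Set.mem_diff,
        Set.mem_singleton_iff]
      rw [subdivRoot_adj huv]
      constructor
      · rintro (⟨a, b, ha, rfl, hab, hs⟩ | ⟨h, -⟩ | ⟨rfl, -⟩)
        · rw [Sum.inl.injEq] at ha
          subst ha
          refine Or.inr ⟨b, ⟨hab, ?_⟩, rfl⟩
          intro h1x
          exact hs (by rw [h1x])
        · simp at h
        · exact Or.inl rfl
      · rintro (rfl | ⟨b, ⟨hab, hb⟩, rfl⟩)
        · exact Or.inr (Or.inr ⟨rfl, Or.inl rfl⟩)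
        · refine Or.inl ⟨w, b, rfl, rfl, hab, ?_⟩
          intro hs
          rw [Sym2.eq_iff] at hs
          rcases hs with ⟨-, h1⟩ | ⟨h1, -⟩
          · exact hb h1
          · exact huv h1
    rw [deg, hN, Set.ncard_insert_of_notMem (by simp),
      Set.ncard_image_of_injective _ Sum.inl_injective, deg]
    exact Set.ncard_diff_singleton_add_one hadj
  by_cases hwv : w = v
  · subst hwv
    have hN : (subdivRoot G u w).neighborSet (Sum.inl w) =
        insert (Sum.inr () : V ⊕ Unit) (Sum.inl '' (G.neighborSet w \ {u})) := by
      ext y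
      simp only [mem_neighborSet, Set.mem_insert_iff, Set.mem_image, Set.mem_diff,
        Set.mem_singleton_iff]
      rw [subdivRoot_adj huv]
      constructor
      · rintro (⟨a, b, ha, rfl, hab, hs⟩ | ⟨h, -⟩ | ⟨rfl, -⟩)
        · rw [Sum.inl.injEq] at ha
          subst ha
          refine Or.inr ⟨b, ⟨hab, ?_⟩, rfl⟩
          intro h1x
          exact hs (by rw [h1x, Sym2.eq_swap])
        · simp at h
        · exact Or.inl rfl
      · rintro (rfl | ⟨b, ⟨hab, hb⟩, rfl⟩)
        · exact Or.inr (Or.inr ⟨rfl, Or.inr rfl⟩)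
        · refine Or.inl ⟨w, b, rfl, rfl, hab, ?_⟩
          intro hs
          rw [Sym2.eq_iff] at hs
          rcases hs with ⟨h1, -⟩ | ⟨-, h1⟩
          · exact huv h1.symm
          · exact hb h1
    rw [deg, hN, Set.ncard_insert_of_notMem (by simp),
      Set.ncard_image_of_injective _ Sum.inl_injective, deg]
    exact Set.ncard_diff_singleton_add_one hadj.symm
  · have hN : (subdivRoot G u v).neighborSet (Sum.inl w) = Sum.inl '' G.neighborSet w := by
      ext y
      simp only [mem_neighborSet, Set.mem_image]
      rw [subdivRoot_adj huv]
      constructor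
      · rintro (⟨a, b, ha, rfl, hab, hs⟩ | ⟨h, -⟩ | ⟨-, (h | h)⟩)
        · rw [Sum.inl.injEq] at ha
          subst ha
          exact ⟨b, hab, rfl⟩
        · simp at h
        · rw [Sum.inl.injEq] at h; exact absurd h hwu
        · rw [Sum.inl.injEq] at h; exact absurd h hwv
      · rintro ⟨b, hab, rfl⟩
        refine Or.inl ⟨w, b, rfl, rfl, hab, ?_⟩
        intro hs
        rw [Sym2.eq_iff] at hs
        rcases hs with ⟨h1, -⟩ | ⟨h1, -⟩
        · exact hwu h1
        · exact hwv h1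
    rw [deg, hN, Set.ncard_image_of_injective _ Sum.inl_injective, deg]

lemma forward_main {V : Type*} [Finite V] (G : SimpleGraph V) (X : Set V)
    (hphylo : IsBinaryPhylo G X) (htb : TreeBased G X) :
    ∃ u v : V, G.Adj u v ∧ ∃ A : (V ⊕ Unit) → (V ⊕ Unit) → Prop,
      IsOrientation (subdivRoot G u v) A ∧
      IsBinaryRootedPhylo A (Sum.inr ()) (Sum.inl '' X) ∧
      (∃ T, IsArbor A T (Sum.inr ()) ∧ arbLeaves T = Sum.inl '' X ∧
        outdeg T (Sum.inr ()) = 2) := by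
  classical
  obtain ⟨T, ⟨⟨hTle, hTtree⟩, hTX⟩⟩ := htb
  obtain ⟨⟨hGconn, hG2, hGX⟩, hG3⟩ := hphylo
  obtain ⟨v₀⟩ := hGconn.nonempty
  have hnontriv : ∃ z : V, z ≠ v₀ := by
    by_contra h
    push_neg at h
    have hdeg0 : deg G v₀ = 0 := by
      have he : G.neighborSet v₀ = ∅ := by
        ext z
        simp only [mem_neighborSet, Set.mem_empty_iff_false, iff_false]
        intro hz
        exact hz.ne' (h z)
      rw [deg, he, Set.ncard_empty]
    by_cases hv : v₀ ∈ X
    · rw [← hGX] at hv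
      have : deg G v₀ = 1 := hv
      omega
    · have := hG3 v₀ hv
      omega
  obtain ⟨z₀, hz₀⟩ := hnontriv
  obtain ⟨u, v, hadjT⟩ : ∃ a b : V, T.Adj a b := by
    obtain ⟨a, ha⟩ := exists_adj_of_ne hTtree.isConnected hz₀
    exact ⟨v₀, a, ha⟩
  have hadjG : G.Adj u v := hTle hadjT
  have huv : u ≠ v := hadjG.ne
  have hdegTpos : ∀ w : V, 0 < deg T w := by
    intro w
    have hex : ∃ z : V, z ≠ w := by
      by_cases h : w = v₀
      · exact ⟨z₀, h ▸ hz₀⟩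
      · exact ⟨v₀, fun hh => h hh.symm⟩
    obtain ⟨z, hzw⟩ := hex
    obtain ⟨a, ha⟩ := exists_adj_of_ne hTtree.isConnected hzw
    rw [deg, Set.ncard_pos (Set.toFinite _)]
    exact ⟨a, ha⟩
  -- linear order extending the arborescence
  have hAcycT₀ : Acyc (T0rel T u v) := fwd_acyc
  haveI hpo : IsPartialOrder (V ⊕ Unit) (ReflTransGen (T0rel T u v)) :=
    { refl := fun a => ReflTransGen.refl
      trans := fun a b c hab hbc => hab.trans hbc
      antisymm := fun a b h1 h2 => rtg_antisymm hAcycT₀ h1 h2 }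
  obtain ⟨L, hLlin, hrL⟩ := extend_partialOrder (ReflTransGen (T0rel T u v))
  have hanti : ∀ a b, L a b → L b a → a = b := fun a b h1 h2 =>
    hLlin.toIsPartialOrder.toAntisymm.antisymm a b h1 h2
  have htot : ∀ a b, L a b ∨ L b a := fun a b => hLlin.toTotal.total a b
  have htrans : ∀ a b c, L a b → L b c → L a c := fun a b c h1 h2 =>
    hLlin.toIsPartialOrder.toIsPreorder.toIsTrans.trans a b c h1 h2
  set H := subdivRoot G u v with hHdef
  set A : (V ⊕ Unit) → (V ⊕ Unit) → Prop :=
    fun x y => H.Adj x y ∧ L x y ∧ x ≠ y with hAdef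
  have hT₀A : ∀ x y, T0rel T u v x y → A x y := by
    intro x y h
    have hne : x ≠ y := by
      rintro rfl
      exact hAcycT₀ x (Relation.TransGen.single h)
    have hadjH : H.Adj x y := by
      rcases h with ⟨rfl, (rfl | rfl)⟩ | ⟨a, b, rfl, rfl, hR, hs⟩
      · exact (subdivRoot_adj huv _ _).mpr (Or.inr (Or.inl ⟨rfl, Or.inl rfl⟩))
      · exact (subdivRoot_adj huv _ _).mpr (Or.inr (Or.inl ⟨rfl, Or.inr rfl⟩))
      · exact (subdivRoot_adj huv _ _).mpr (Or.inl ⟨a, b, rfl, rfl, hTle hR.1, hs⟩)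
    exact ⟨hadjH, hrL _ _ (ReflTransGen.single h), hne⟩
  have horient : IsOrientation H A := by
    constructor
    · rintro a b ⟨h1, h2, h3⟩
      exact ⟨h1, fun h' => h3 (hanti _ _ h2 h'.2.1)⟩
    · intro a b h
      rcases htot a b with hL | hL
      · exact Or.inl ⟨h, hL, h.ne⟩
      · exact Or.inr ⟨h.symm, hL, h.ne'⟩
  have hAcycA : Acyc A := by
    have key : ∀ a b, Relation.TransGen A a b → L a b ∧ a ≠ b := by
      intro a b h
      induction h with
      | single h' => exact ⟨h'.2.1, h'.2.2⟩
      | tail _ h' ih =>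
        refine ⟨htrans _ _ _ ih.1 h'.2.1, ?_⟩
        rintro rfl
        exact ih.2 (hanti _ _ ih.1 h'.2.1)
    exact fun x hx => (key x x hx).2 rfl
  -- root arcs
  have hrootu : T0rel T u v (Sum.inr ()) (Sum.inl u) := Or.inl ⟨rfl, Or.inl rfl⟩
  have hrootv : T0rel T u v (Sum.inr ()) (Sum.inl v) := Or.inl ⟨rfl, Or.inr rfl⟩
  have hinluv : (Sum.inl u : V ⊕ Unit) ≠ Sum.inl v := fun h => huv (Sum.inl_injective h)
  -- in/out degrees of A at the root
  have hinρ : {x | A x (Sum.inr ())} = ∅ := by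
    ext x
    simp only [Set.mem_setOf_eq, Set.mem_empty_iff_false, iff_false]
    rintro ⟨h1, h2, h3⟩
    rcases (subdivRoot_adj huv _ _).mp h1 with ⟨a, b, -, hb, -, -⟩ | ⟨-, (h | h)⟩ |
      ⟨-, (rfl | rfl)⟩
    · simp at hb
    · simp at h
    · simp at h
    · exact (horient.1 _ _ (hT₀A _ _ hrootu)).2 ⟨h1, h2, h3⟩
    · exact (horient.1 _ _ (hT₀A _ _ hrootv)).2 ⟨h1, h2, h3⟩
  have houtρset : {y | A (Sum.inr ()) y} = {Sum.inl u, Sum.inl v} := by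
    ext y
    simp only [Set.mem_setOf_eq, Set.mem_insert_iff, Set.mem_singleton_iff]
    constructor
    · rintro ⟨h1, -, -⟩
      rcases (subdivRoot_adj huv _ _).mp h1 with ⟨a, b, ha, -, -, -⟩ | ⟨-, h⟩ | ⟨rfl, (h | h)⟩
      · simp at ha
      · exact h
      · simp at h
      · simp at h
    · rintro (rfl | rfl)
      · exact hT₀A _ _ hrootu
      · exact hT₀A _ _ hrootv
  have hindegAρ0 : indeg A (Sum.inr ()) = 0 := by
    rw [indeg, hinρ, Set.ncard_empty]
  have houtAρ2 : outdeg A (Sum.inr ()) = 2 := by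
    rw [outdeg, houtρset, Set.ncard_pair hinluv]
  -- parents
  have hpar : ∀ w : V, ∃ p, T0rel T u v p (Sum.inl w) := by
    intro w
    by_cases hwu : w = u
    · subst hwu; exact ⟨Sum.inr (), hrootu⟩
    by_cases hwv : w = v
    · subst hwv; exact ⟨Sum.inr (), hrootv⟩
    obtain ⟨a, hset⟩ := fwd_in_other hTtree hwu hwv
    refine ⟨Sum.inl a, ?_⟩
    have : Sum.inl a ∈ {x | T0rel T u v x (Sum.inl w)} := by rw [hset]; rfl
    exact this
  have hindegApos : ∀ w : V, 1 ≤ indeg A (Sum.inl w) := by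
    intro w
    obtain ⟨p, hp⟩ := hpar w
    have hne : ({x | A x (Sum.inl w)} : Set (V ⊕ Unit)).Nonempty := ⟨p, hT₀A _ _ hp⟩
    have hpos := (Set.ncard_pos (Set.toFinite _)).mpr hne
    rw [indeg]
    omega
  have hsum : ∀ y, indeg A y + outdeg A y = deg H y := orient_deg horient
  have hsumw : ∀ w : V, indeg A (Sum.inl w) + outdeg A (Sum.inl w) = deg G w := by
    intro w
    rw [hsum (Sum.inl w), hHdef, fwd_degH huv hadjG w]
  -- the X characterisation
  have hXiff : ∀ y, (y ∈ Sum.inl '' X ↔ indeg A y = 1 ∧ outdeg A y = 0) := by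
    rintro (w | ⟨⟩)
    · simp only [Set.mem_image, Sum.inl.injEq]
      constructor
      · rintro ⟨x, hx, rfl⟩
        have hw1 : deg G x = 1 := by
          rw [← hGX] at hx
          exact hx
        have := hsumw x
        have := hindegApos x
        constructor <;> omega
      · rintro ⟨hi, ho⟩
        have hw1 : deg G w = 1 := by
          have := hsumw w
          omega
        have : w ∈ leaves G := hw1
        rw [hGX] at this
        exact ⟨w, this, rfl⟩
    · constructor
      · rintro ⟨x, -, h⟩
        simp at h
      · rintro ⟨hi, -⟩
        rw [hindegAρ0] at hi
        omega
  -- internal vertices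
  have hinternal : ∀ y, y ≠ Sum.inr () → y ∉ Sum.inl '' X →
      (indeg A y = 1 ∧ outdeg A y = 2) ∨ (indeg A y = 2 ∧ outdeg A y = 1) := by
    rintro (w | ⟨⟩) hne hnX
    · have hwX : w ∉ X := fun h => hnX ⟨w, h, rfl⟩
      have h3 : deg G w = 3 := hG3 w hwX
      have hTw : deg T w ≠ 1 := by
        intro h1
        have : w ∈ leaves T := h1
        rw [hTX] at this
        exact hwX this
      have houtT := fwd_out_inl hTtree hadjT w
      have hTpos := hdegTpos w
      have houtTpos : 1 ≤ {y | T0rel T u v (Sum.inl w) y}.ncard := by omega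
      have hnonempty : ({y | T0rel T u v (Sum.inl w) y} : Set (V ⊕ Unit)).Nonempty := by
        rw [← Set.ncard_pos (Set.toFinite _)]
        omega
      obtain ⟨c, hc⟩ := hnonempty
      have hAc : ({y | A (Sum.inl w) y} : Set (V ⊕ Unit)).Nonempty := ⟨c, hT₀A _ _ hc⟩
      have houtApos : 1 ≤ outdeg A (Sum.inl w) := by
        have := (Set.ncard_pos (Set.toFinite _)).mpr hAc
        rw [outdeg]
        omega
      have hiw := hindegApos w
      have hsw := hsumw w
      rcases (by omega : indeg A (Sum.inl w) = 1 ∨ indeg A (Sum.inl w) = 2) with h | h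
      · exact Or.inl ⟨h, by omega⟩
      · exact Or.inr ⟨h, by omega⟩
    · exact absurd rfl hne
  have hreachA : ∀ y, ReflTransGen A (Sum.inr ()) y := fun y =>
    Relation.ReflTransGen.mono (fun a b h => hT₀A a b h) _ _ (fwd_reach hTtree hadjT y)
  -- the arborescence conditions
  have hindegT₀ρ : indeg (T0rel T u v) (Sum.inr ()) = 0 := by
    rw [indeg, fwd_in_rho, Set.ncard_empty]
  have hindegT₀1 : ∀ y, y ≠ Sum.inr () → indeg (T0rel T u v) y = 1 := by
    rintro (w | ⟨⟩) hne
    · by_cases hwu : w = u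
      · subst hwu
        rw [indeg, fwd_in_u, Set.ncard_singleton]
      by_cases hwv : w = v
      · subst hwv
        rw [indeg, fwd_in_v hTtree hadjT, Set.ncard_singleton]
      obtain ⟨a, hset⟩ := fwd_in_other hTtree hwu hwv
      rw [indeg, hset, Set.ncard_singleton]
    · exact absurd rfl hne
  have harbor : IsArbor A (T0rel T u v) (Sum.inr ()) :=
    ⟨hT₀A, hindegT₀ρ, hindegT₀1, fwd_reach hTtree hadjT⟩
  have harbLeaves : arbLeaves (T0rel T u v) = Sum.inl '' X := by
    ext y
    rcases y with w | ⟨⟩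
    · have houtT := fwd_out_inl hTtree hadjT w
      simp only [arbLeaves, Set.mem_setOf_eq, Set.mem_image, Sum.inl.injEq]
      constructor
      · intro h
        rw [outdeg] at h
        have hw1 : deg T w = 1 := by omega
        have : w ∈ leaves T := hw1
        rw [hTX] at this
        exact ⟨w, this, rfl⟩
      · rintro ⟨x, hx, rfl⟩
        have : x ∈ leaves T := by rw [hTX]; exact hx
        have hw1 : deg T x = 1 := this
        rw [outdeg]
        omega
    · simp only [arbLeaves, Set.mem_setOf_eq, Set.mem_image]
      have : outdeg (T0rel T u v) (Sum.inr ()) = 2 := by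
        rw [outdeg, fwd_out_rho, Set.ncard_pair hinluv]
      rw [this]
      simp
  have houtT₀ρ2 : outdeg (T0rel T u v) (Sum.inr ()) = 2 := by
    rw [outdeg, fwd_out_rho, Set.ncard_pair hinluv]
  exact ⟨u, v, hadjG, A, horient,
    ⟨hAcycA, hindegAρ0, houtAρ2, hXiff, hinternal, hreachA⟩,
    T0rel T u v, harbor, harbLeaves, houtT₀ρ2⟩

end ForwardMain

section BackHelpers
variable {V : Type*} {T : SimpleGraph V}

lemma cycle_ends {m : V} {c : T.Walk m m} (hc : c.IsCycle) :
    ∃ (b p : V), T.Adj m b ∧ T.Adj p m ∧ b ≠ p ∧ b ∈ c.support ∧ p ∈ c.support := by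
  cases c with
  | nil =>
    have := hc.three_le_length
    simp at this
  | cons h q =>
    have h3 : 3 ≤ (SimpleGraph.Walk.cons h q).length := hc.three_le_length
    rw [SimpleGraph.Walk.length_cons] at h3
    have hql : 0 < q.length := by omega
    obtain ⟨p, r, h2, rfl⟩ := exists_concat_of_pos hql
    refine ⟨_, p, h, h2, ?_, ?_, ?_⟩
    · have hnodup := hc.isCircuit.isTrail.edges_nodup
      rw [SimpleGraph.Walk.edges_cons] at hnodup
      have hnotmem := (List.nodup_cons.mp hnodup).1
      intro heq
      subst heq
      apply hnotmem
      rw [Sym2.eq_swap, SimpleGraph.Walk.edges_concat]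
      simp
    · rw [SimpleGraph.Walk.support_cons]
      exact List.mem_cons_of_mem _ ((r.concat h2).start_mem_support)
    · rw [SimpleGraph.Walk.support_cons]
      refine List.mem_cons_of_mem _ ?_
      rw [SimpleGraph.Walk.support_concat]
      simp only [List.concat_eq_append, List.mem_append]
      exact Or.inl r.end_mem_support

lemma mem_support_rotate [DecidableEq V] {m x z : V} {c : T.Walk x x}
    (hm : m ∈ c.support) (hz : z ∈ (c.rotate _ hm).support) : z ∈ c.support := by
  rw [SimpleGraph.Walk.support_eq_cons] at hz
  rcases List.mem_cons.mp hz with rfl | hz'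
  · exact hm
  · have hrot := SimpleGraph.Walk.support_rotate c _ hm
    rw [SimpleGraph.Walk.support_eq_cons c]
    exact List.mem_cons_of_mem _ (hrot.mem_iff.mp hz')

end BackHelpers

section BackwardMain
open Relation

lemma backward_main {V : Type*} [Finite V] (G : SimpleGraph V) (X : Set V)
    {u v : V} (hadjG : G.Adj u v) {A : (V ⊕ Unit) → (V ⊕ Unit) → Prop}
    (hor : IsOrientation (subdivRoot G u v) A)
    (hbrp : IsBinaryRootedPhylo A (Sum.inr ()) (Sum.inl '' X))
    {T₀ : (V ⊕ Unit) → (V ⊕ Unit) → Prop}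
    (harb : IsArbor A T₀ (Sum.inr ())) (hlv : arbLeaves T₀ = Sum.inl '' X)
    (hout2 : outdeg T₀ (Sum.inr ()) = 2) : TreeBased G X := by
  classical
  have huv : u ≠ v := hadjG.ne
  obtain ⟨hT₀A, hin0, hin1, hreach⟩ := harb
  obtain ⟨hacycA, hinAρ, -, -, -, -⟩ := hbrp
  have hinluv : (Sum.inl u : V ⊕ Unit) ≠ Sum.inl v := fun h => huv (Sum.inl_injective h)
  have hnoAρ : ∀ x, ¬ A x (Sum.inr ()) := by
    intro x hx
    have hempty : {y | A y (Sum.inr ())} = ∅ :=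
      (Set.ncard_eq_zero (Set.toFinite _)).mp hinAρ
    have hx' : x ∈ {y | A y (Sum.inr ())} := hx
    rw [hempty] at hx'
    exact hx'
  have hnoT₀ρ : ∀ x, ¬ T₀ x (Sum.inr ()) := fun x hx => hnoAρ x (hT₀A _ _ hx)
  have hAcycT₀ : Acyc T₀ := fun x hx => hacycA x (Relation.TransGen.mono hT₀A _ _ hx)
  -- children of the root
  have hrootsub : {y | T₀ (Sum.inr ()) y} ⊆ {Sum.inl u, Sum.inl v} := by
    intro y hy
    have hadj := (hor.1 _ _ (hT₀A _ _ hy)).1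
    rcases (subdivRoot_adj huv _ _).mp hadj with ⟨a, b, ha, -, -, -⟩ | ⟨-, h⟩ | ⟨hy', -⟩
    · simp at ha
    · exact h
    · rw [hy'] at hy
      exact absurd hy (hnoT₀ρ _)
  have hrootset : {y | T₀ (Sum.inr ()) y} = {Sum.inl u, Sum.inl v} := by
    apply Set.eq_of_subset_of_ncard_le hrootsub _ (Set.toFinite _)
    rw [Set.ncard_pair hinluv]
    have : {y | T₀ (Sum.inr ()) y}.ncard = 2 := hout2
    omega
  have hrootu : T₀ (Sum.inr ()) (Sum.inl u) := by
    have : (Sum.inl u : V ⊕ Unit) ∈ {y | T₀ (Sum.inr ()) y} := by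
      rw [hrootset]; exact Or.inl rfl
    exact this
  have hrootv : T₀ (Sum.inr ()) (Sum.inl v) := by
    have : (Sum.inl v : V ⊕ Unit) ∈ {y | T₀ (Sum.inr ()) y} := by
      rw [hrootset]; exact Or.inr rfl
    exact this
  -- unique parents
  have hpar : ∀ y, y ≠ Sum.inr () → ∃ x, {x' | T₀ x' y} = {x} := by
    intro y hy
    exact Set.ncard_eq_one.mp (hin1 y hy)
  have hparents : ∀ y (x x' : V ⊕ Unit), y ≠ Sum.inr () → T₀ x y → T₀ x' y → x = x' := by
    intro y x x' hy hx hx'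
    obtain ⟨p, hp⟩ := hpar y hy
    have h1 : x ∈ {x'' | T₀ x'' y} := hx
    have h2 : x' ∈ {x'' | T₀ x'' y} := hx'
    rw [hp] at h1 h2
    rw [Set.mem_singleton_iff] at h1 h2
    rw [h1, h2]
  have hparu : ∀ x, T₀ x (Sum.inl u) → x = Sum.inr () := fun x hx =>
    hparents _ _ _ (by simp) hx hrootu
  have hparv : ∀ x, T₀ x (Sum.inl v) → x = Sum.inr () := fun x hx =>
    hparents _ _ _ (by simp) hx hrootv
  -- arcs from inl-vertices go to inl-vertices
  have hinlarc : ∀ (a : V) (y : V ⊕ Unit), T₀ (Sum.inl a) y → ∃ b : V, y = Sum.inl b := by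
    rintro a (b | ⟨⟩) h
    · exact ⟨b, rfl⟩
    · exact absurd h (hnoT₀ρ _)
  have harcG : ∀ a b : V, T₀ (Sum.inl a) (Sum.inl b) → G.Adj a b ∧ s(a, b) ≠ s(u, v) := by
    intro a b h
    have hadj := (hor.1 _ _ (hT₀A _ _ h)).1
    rcases (subdivRoot_adj huv _ _).mp hadj with ⟨a', b', ha, hb, hG, hs⟩ | ⟨h1, -⟩ | ⟨h1, -⟩
    · rw [Sum.inl.injEq] at ha hb
      subst ha; subst hb
      exact ⟨hG, hs⟩
    · simp at h1
    · simp at h1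
  -- the spanning tree
  set T : SimpleGraph V := SimpleGraph.fromEdgeSet
    {e | e = s(u, v) ∨ ∃ a b : V, T₀ (Sum.inl a) (Sum.inl b) ∧ e = s(a, b)} with hTdef
  have hTadj : ∀ x y : V, T.Adj x y ↔
      (s(x, y) = s(u, v) ∨ T₀ (Sum.inl x) (Sum.inl y) ∨ T₀ (Sum.inl y) (Sum.inl x)) := by
    intro x y
    rw [hTdef, fromEdgeSet_adj]
    constructor
    · rintro ⟨(h | ⟨a, b, harc, he⟩), hne⟩
      · exact Or.inl h
      · rw [Sym2.eq_iff] at he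
        rcases he with ⟨rfl, rfl⟩ | ⟨rfl, rfl⟩
        · exact Or.inr (Or.inl harc)
        · exact Or.inr (Or.inr harc)
    · rintro (h | h | h)
      · refine ⟨Or.inl h, ?_⟩
        rintro rfl
        rw [Sym2.eq_iff] at h
        rcases h with ⟨h1, h2⟩ | ⟨h1, h2⟩ <;> exact huv (h1 ▸ h2 ▸ rfl)
      · exact ⟨Or.inr ⟨x, y, h, rfl⟩, (harcG _ _ h).1.ne⟩
      · exact ⟨Or.inr ⟨y, x, h, Sym2.eq_swap.symm⟩, (harcG _ _ h).1.ne'⟩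
  have hTle : T ≤ G := by
    intro x y h
    rcases (hTadj x y).mp h with h1 | h1 | h1
    · rw [Sym2.eq_iff] at h1
      rcases h1 with ⟨rfl, rfl⟩ | ⟨rfl, rfl⟩
      · exact hadjG
      · exact hadjG.symm
    · exact (harcG _ _ h1).1
    · exact (harcG _ _ h1).1.symm
  have hTadjuv : T.Adj u v := (hTadj u v).mpr (Or.inl rfl)
  -- connectivity
  have hconn1 : ∀ y, Relation.ReflTransGen T₀ (Sum.inr ()) y →
      y = Sum.inr () ∨ ∃ w : V, y = Sum.inl w ∧ T.Reachable u w := by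
    intro y hy
    induction hy with
    | refl => exact Or.inl rfl
    | tail hrtg hstep ih =>
      rcases ih with rfl | ⟨w, rfl, hw⟩
      · rcases hrootsub hstep with h | h
        · exact Or.inr ⟨u, h, SimpleGraph.Reachable.refl u⟩
        · exact Or.inr ⟨v, h, hTadjuv.reachable⟩
      · obtain ⟨z, rfl⟩ := hinlarc w _ hstep
        exact Or.inr ⟨z, rfl, hw.trans ((hTadj w z).mpr (Or.inr (Or.inl hstep))).reachable⟩
  have hTconn : T.Connected := by
    rw [SimpleGraph.connected_iff]
    refine ⟨?_, ⟨u⟩⟩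
    intro x y
    rcases hconn1 _ (hreach (Sum.inl x)) with h | ⟨w, hw, hwr⟩
    · simp at h
    rcases hconn1 _ (hreach (Sum.inl y)) with h | ⟨w', hw', hwr'⟩
    · simp at h
    rw [Sum.inl.injEq] at hw hw'
    subst hw; subst hw'
    exact hwr.symm.trans hwr'
  -- acyclicity
  haveI hpo : IsPartialOrder (V ⊕ Unit) (ReflTransGen A) :=
    { refl := fun a => ReflTransGen.refl
      trans := fun a b c hab hbc => hab.trans hbc
      antisymm := fun a b h1 h2 => rtg_antisymm hacycA h1 h2 }
  obtain ⟨L, hLlin, hrL⟩ := extend_partialOrder (ReflTransGen A)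
  have hanti : ∀ a b, L a b → L b a → a = b := fun a b h1 h2 =>
    hLlin.toIsPartialOrder.toAntisymm.antisymm a b h1 h2
  have htot : ∀ a b, L a b ∨ L b a := fun a b => hLlin.toTotal.total a b
  have htrans : ∀ a b c, L a b → L b c → L a c := fun a b c h1 h2 =>
    hLlin.toIsPartialOrder.toIsPreorder.toIsTrans.trans a b c h1 h2
  have hLe : ∀ a b : V, T₀ (Sum.inl a) (Sum.inl b) → L (Sum.inl a) (Sum.inl b) :=
    fun a b h => hrL _ _ (ReflTransGen.single (hT₀A _ _ h))
  have hTacyc : T.IsAcyclic := by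
    intro x c hc
    obtain ⟨m, hm, hmax⟩ := list_max (l := fun a b : V => L (Sum.inl a) (Sum.inl b))
      (fun a b => htot _ _) (fun a b c h1 h2 => htrans _ _ _ h1 h2)
      c.support c.support_ne_nil
    have hc' := hc.rotate hm
    obtain ⟨b, p, hmb, hpm, hbp, hbs, hps⟩ := cycle_ends hc'
    have hdir : ∀ z : V, T.Adj m z → z ∈ (c.rotate _ hm).support →
        T₀ (Sum.inl z) (Sum.inl m) ∨ s(m, z) = s(u, v) := by
      intro z hz hzs
      rcases (hTadj m z).mp hz with h | h | h
      · exact Or.inr h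
      · exfalso
        have h1 : L (Sum.inl m) (Sum.inl z) := hLe _ _ h
        have h2 : L (Sum.inl z) (Sum.inl m) := hmax z (mem_support_rotate hm hzs)
        exact hz.ne (Sum.inl_injective (hanti _ _ h1 h2))
      · exact Or.inl h
    rcases hdir b hmb hbs with h1 | h1 <;> rcases hdir p hpm.symm hps with h2 | h2
    · exact hbp (Sum.inl_injective (hparents (Sum.inl m) _ _ (by simp) h1 h2))
    · have hmuv : m = u ∨ m = v := by
        rw [Sym2.eq_iff] at h2
        rcases h2 with ⟨h3, -⟩ | ⟨h3, -⟩
        · exact Or.inl h3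
        · exact Or.inr h3
      have : Sum.inl b = Sum.inr () := by
        rcases hmuv with rfl | rfl
        · exact hparu _ h1
        · exact hparv _ h1
      simp at this
    · have hmuv : m = u ∨ m = v := by
        rw [Sym2.eq_iff] at h1
        rcases h1 with ⟨h3, -⟩ | ⟨h3, -⟩
        · exact Or.inl h3
        · exact Or.inr h3
      have : Sum.inl p = Sum.inr () := by
        rcases hmuv with rfl | rfl
        · exact hparu _ h2
        · exact hparv _ h2
      simp at this
    · apply hbp
      rw [Sym2.eq_iff] at h1 h2
      rcases h1 with ⟨rfl, rfl⟩ | ⟨rfl, rfl⟩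
      · rcases h2 with ⟨-, h4⟩ | ⟨h3, -⟩
        · exact h4.symm
        · exact absurd h3 huv
      · rcases h2 with ⟨h3, -⟩ | ⟨-, h4⟩
        · exact absurd h3.symm huv
        · exact h4.symm
  -- degrees in T
  have houtw : ∀ w : V, outdeg T₀ (Sum.inl w) = {z : V | T₀ (Sum.inl w) (Sum.inl z)}.ncard := by
    intro w
    rw [outdeg]
    have himg : {y | T₀ (Sum.inl w) y} = Sum.inl '' {z : V | T₀ (Sum.inl w) (Sum.inl z)} := by
      ext y
      simp only [Set.mem_setOf_eq, Set.mem_image]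
      constructor
      · intro hy
        obtain ⟨z, rfl⟩ := hinlarc w _ hy
        exact ⟨z, hy, rfl⟩
      · rintro ⟨z, hz, rfl⟩
        exact hz
    rw [himg, Set.ncard_image_of_injective _ Sum.inl_injective]
  have hdegTw : ∀ w : V, deg T w = {z : V | T₀ (Sum.inl w) (Sum.inl z)}.ncard + 1 := by
    intro w
    by_cases hwu : w = u
    · subst hwu
      have hN : T.neighborSet w = insert v {z : V | T₀ (Sum.inl w) (Sum.inl z)} := by
        ext z
        simp only [mem_neighborSet, Set.mem_insert_iff, Set.mem_setOf_eq]
        rw [hTadj]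
        constructor
        · rintro (h | h | h)
          · rw [Sym2.eq_iff] at h
            rcases h with ⟨-, h1⟩ | ⟨h1, -⟩
            · exact Or.inl h1
            · exact absurd h1 huv
          · exact Or.inr h
          · have := hparu _ h
            simp at this
        · rintro (rfl | h)
          · exact Or.inl rfl
          · exact Or.inr (Or.inl h)
      have hvnot : v ∉ {z : V | T₀ (Sum.inl w) (Sum.inl z)} := by
        intro h
        exact (harcG _ _ h).2 rfl
      rw [deg, hN, Set.ncard_insert_of_notMem hvnot]
    by_cases hwv : w = v
    · subst hwv
      have hN : T.neighborSet w = insert u {z : V | T₀ (Sum.inl w) (Sum.inl z)} := by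
        ext z
        simp only [mem_neighborSet, Set.mem_insert_iff, Set.mem_setOf_eq]
        rw [hTadj]
        constructor
        · rintro (h | h | h)
          · rw [Sym2.eq_iff] at h
            rcases h with ⟨h1, -⟩ | ⟨-, h1⟩
            · exact absurd h1.symm huv
            · exact Or.inl h1
          · exact Or.inr h
          · have := hparv _ h
            simp at this
        · rintro (rfl | h)
          · exact Or.inl (Sym2.eq_swap)
          · exact Or.inr (Or.inl h)
      have hunot : u ∉ {z : V | T₀ (Sum.inl w) (Sum.inl z)} := by
        intro h
        exact (harcG _ _ h).2 Sym2.eq_swap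
      rw [deg, hN, Set.ncard_insert_of_notMem hunot]
    · -- w has a parent which is some inl a
      have hwρ : (Sum.inl w : V ⊕ Unit) ≠ Sum.inr () := by simp
      obtain ⟨pp, hpp⟩ := hpar (Sum.inl w) hwρ
      have hppmem : T₀ pp (Sum.inl w) := by
        have : pp ∈ {x' | T₀ x' (Sum.inl w)} := by rw [hpp]; rfl
        exact this
      have hppinl : ∃ a : V, pp = Sum.inl a := by
        rcases pp with a | ⟨⟩
        · exact ⟨a, rfl⟩
        · exfalso
          have h' := hrootsub hppmem
          simp only [Set.mem_insert_iff, Set.mem_singleton_iff, Sum.inl.injEq] at h'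
          rcases h' with h | h
          · exact hwu h
          · exact hwv h
      obtain ⟨a, rfl⟩ := hppinl
      have hN : T.neighborSet w = insert a {z : V | T₀ (Sum.inl w) (Sum.inl z)} := by
        ext z
        simp only [mem_neighborSet, Set.mem_insert_iff, Set.mem_setOf_eq]
        rw [hTadj]
        constructor
        · rintro (h | h | h)
          · rw [Sym2.eq_iff] at h
            rcases h with ⟨h1, -⟩ | ⟨h1, -⟩
            · exact absurd h1 hwu
            · exact absurd h1 hwv
          · exact Or.inr h
          · have := hparents (Sum.inl w) _ _ hwρ h hppmem
            rw [Sum.inl.injEq] at this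
            exact Or.inl this
        · rintro (rfl | h)
          · exact Or.inr (Or.inr hppmem)
          · exact Or.inr (Or.inl h)
      have hanot : a ∉ {z : V | T₀ (Sum.inl w) (Sum.inl z)} := by
        intro h
        exact hAcycT₀ (Sum.inl w) ((Relation.TransGen.single h).tail hppmem)
      rw [deg, hN, Set.ncard_insert_of_notMem hanot]
  -- leaves of T are exactly X
  have hTleaves : leaves T = X := by
    ext w
    have h1 : w ∈ leaves T ↔ deg T w = 1 := Iff.rfl
    rw [h1, hdegTw w]
    have h2 : {z : V | T₀ (Sum.inl w) (Sum.inl z)}.ncard = 0 ↔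
        (Sum.inl w : V ⊕ Unit) ∈ arbLeaves T₀ := by
      rw [arbLeaves, Set.mem_setOf_eq, houtw w]
    constructor
    · intro h
      have h0 : {z : V | T₀ (Sum.inl w) (Sum.inl z)}.ncard = 0 := by omega
      have := h2.mp h0
      rw [hlv] at this
      obtain ⟨x, hx, hxe⟩ := this
      rw [Sum.inl.injEq] at hxe
      rwa [← hxe]
    · intro h
      have : (Sum.inl w : V ⊕ Unit) ∈ arbLeaves T₀ := by
        rw [hlv]
        exact ⟨w, h, rfl⟩
      have h0 := h2.mpr this
      omega
  exact ⟨T, ⟨⟨hTle, ⟨hTconn, hTacyc⟩⟩, hTleaves⟩⟩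

end BackwardMain

theorem stmt16 {V : Type*} [Finite V] (G : SimpleGraph V) (X : Set V)
    (hphylo : IsBinaryPhylo G X) (hproper : IsProper G X) :
    TreeBased G X ↔
      ∃ u v : V, G.Adj u v ∧ ∃ A : (V ⊕ Unit) → (V ⊕ Unit) → Prop,
        IsOrientation (subdivRoot G u v) A ∧
        IsBinaryRootedPhylo A (Sum.inr ()) (Sum.inl '' X) ∧
        (∃ T, IsArbor A T (Sum.inr ()) ∧ arbLeaves T = Sum.inl '' X ∧
          outdeg T (Sum.inr ()) = 2) := by
  constructor
  · intro htb
    exact forward_main G X hphylo htb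
  · rintro ⟨u, v, hadjG, A, hor, hbrp, T₀, harb, hlv, hout2⟩
    exact backward_main G X hadjG hor hbrp harb hlv hout2
end

section
/- If N is a proper unrooted phylogenetic network on X with a spanning tree T having exactly two leaves, then N is tree-based. (In particular, both leaves of T must belong to X.) -/
open SimpleGraph

/-! A leaf of `N` keeps its unique neighbour in every spanning tree, so `X ⊆ leaves T`.
Properness (at a cut vertex) forces `|X| ≥ 2`, hence `X` fills both leaves of `T`. -/

lemma leaves_subset_leaves_of_le {V : Type*} [Nontrivial V] {G H : SimpleGraph V} (hle : H ≤ G)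
    (hH : H.Preconnected) : leaves G ⊆ leaves H := by
  intro x (hx : deg G x = 1)
  obtain ⟨a, ha⟩ := Set.ncard_eq_one.mp hx
  have hsub : H.neighborSet x ⊆ {a} := ha ▸ fun _ hy ↦ hle hy
  have hne : (H.neighborSet x).Nonempty := hH.exists_adj_of_nontrivial x
  show deg H x = 1
  rw [deg, hne.subset_singleton_iff.mp hsub, Set.ncard_singleton]

lemma IsProper.nontrivial {V : Type*} [Nontrivial V] {G : SimpleGraph V} {X : Set V}
    (h : IsProper G X) : X.Nontrivial := by
  have avoid : ∀ w, ∃ x ∈ X, x ≠ w := fun w ↦ by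
    obtain ⟨v, hv⟩ := exists_ne w
    obtain ⟨x, hx, -⟩ := h.2 w ⟨v, hv⟩
    exact ⟨x, hx, x.2⟩
  obtain ⟨x, hx, -⟩ := avoid (Classical.arbitrary V)
  obtain ⟨y, hy, hyx⟩ := avoid x
  exact ⟨x, hx, y, hy, hyx.symm⟩

theorem stmt19_general {V : Type*} (G : SimpleGraph V) (X : Set V)
    (hphylo : IsPhylo G X) (hproper : IsProper G X)
    (T : SimpleGraph V) (hT : IsSpanningTree G T) (h2 : (leaves T).ncard = 2) :
    TreeBased G X ∧ leaves T ⊆ X := by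
  obtain ⟨u, w, huw, -⟩ := Set.ncard_eq_two.mp h2
  have : Nontrivial V := ⟨u, w, huw⟩
  have hXT : X ⊆ leaves T :=
    hphylo.2.2 ▸ leaves_subset_leaves_of_le hT.1 hT.2.connected.preconnected
  have hfin : (leaves T).Finite := Set.finite_of_ncard_ne_zero (by omega)
  have : Finite X := (hfin.subset hXT).to_subtype
  have hTX : leaves T = X := by
    refine (Set.eq_of_subset_of_ncard_le hXT ?_ hfin).symm
    rw [h2]
    exact Set.one_lt_ncard_iff_nontrivial.mpr hproper.nontrivial
  exact ⟨⟨T, hT, hTX⟩, hTX.subset⟩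

theorem stmt19 {V : Type*} [Finite V] (G : SimpleGraph V) (X : Set V)
    (hphylo : IsPhylo G X) (hproper : IsProper G X)
    (T : SimpleGraph V) (hT : IsSpanningTree G T) (h2 : (leaves T).ncard = 2) :
    TreeBased G X ∧ leaves T ⊆ X :=
  stmt19_general G X hphylo hproper T hT h2
end
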